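/- arXiv:2404.16706 — 9 statements merged into one kernel-verified Lean document; each statement's English description precedes it below -/
import Mathlib

section
/- For the sequence defined by f_0 = 1 and f_k = (1 - 1/(2k)) f_{k-1} for k ≥ 1, one has the closed form f_k = 4^{-k} * (2k choose k) for all k ≥ 0, and for every integer k ≥ 1 the two-sided bound 1/sqrt(π(k+1)) ≤ f_k ≤ 1/sqrt(πk). -/
/-!
Unrolling the recurrence gives `f k = ∏_{i ≤ k} (2i - 1)/(2i) = 4⁻ᵏ (2k choose k)`. The square of
this ratio is tied to the Wallis product by `W k = ((2k + 1) f k ²)⁻¹`, and the classical bounds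
`(2k + 1)/(2k + 2) · π/2 ≤ W k ≤ π/2` (from comparing `∫ sin ^ n` for consecutive `n`) become
`1/(π(k + 1)) ≤ f k ² ≤ 1/(π k)`.
-/

open Real

lemma inv_four_pow_mul_centralBinom_succ (k : ℕ) :
    (4 : ℝ)⁻¹ ^ (k + 1) * Nat.centralBinom (k + 1) =
      (1 - 1 / (2 * ((k : ℝ) + 1))) * ((4 : ℝ)⁻¹ ^ k * Nat.centralBinom k) := by
  have h : ((k : ℝ) + 1) * Nat.centralBinom (k + 1) = 2 * (2 * k + 1) * Nat.centralBinom k := by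
    exact_mod_cast Nat.succ_mul_centralBinom_succ k
  rw [pow_succ]
  field_simp
  linear_combination 2 * h

lemma eq_inv_four_pow_mul_centralBinom {f : ℕ → ℝ} (hf0 : f 0 = 1)
    (hf : ∀ k : ℕ, f (k + 1) = (1 - 1 / (2 * ((k : ℝ) + 1))) * f k) (k : ℕ) :
    f k = (4 : ℝ)⁻¹ ^ k * Nat.centralBinom k := by
  induction k with
  | zero => simp [hf0]
  | succ k ih => rw [hf, ih, inv_four_pow_mul_centralBinom_succ]

lemma inv_four_pow_mul_centralBinom_pos (k : ℕ) : 0 < (4 : ℝ)⁻¹ ^ k * Nat.centralBinom k := by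
  have := Nat.centralBinom_pos k
  positivity

lemma Real.Wallis.W_eq_inv_centralBinom_sq (k : ℕ) :
    Wallis.W k = ((2 * k + 1) * ((4 : ℝ)⁻¹ ^ k * Nat.centralBinom k) ^ 2)⁻¹ := by
  rw [Wallis.W_eq_factorial_ratio, Nat.centralBinom_eq_two_mul_choose,
    Nat.cast_choose ℝ (by omega : k ≤ 2 * k), show 2 * k - k = k by omega, inv_pow,
    show (2 : ℝ) ^ (4 * k) = (4 ^ k) ^ 2 by
      rw [show (4 : ℝ) = 2 ^ 2 by norm_num, ← pow_mul, ← pow_mul]; ring_nf]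
  field_simp

lemma inv_pi_mul_succ_le_sq_inv_four_pow_mul_centralBinom (k : ℕ) :
    (π * (k + 1))⁻¹ ≤ ((4 : ℝ)⁻¹ ^ k * Nat.centralBinom k) ^ 2 := by
  have hW := Wallis.W_le k
  rw [Wallis.W_eq_inv_centralBinom_sq] at hW
  set x := (4 : ℝ)⁻¹ ^ k * Nat.centralBinom k
  have hx : 0 < x := inv_four_pow_mul_centralBinom_pos k
  rw [inv_le_iff_one_le_mul₀ (by positivity)] at hW ⊢
  nlinarith [pi_pos]

lemma sq_inv_four_pow_mul_centralBinom_le_inv_pi_mul {k : ℕ} (hk : 0 < k) :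
    ((4 : ℝ)⁻¹ ^ k * Nat.centralBinom k) ^ 2 ≤ (π * k)⁻¹ := by
  have hW := Wallis.le_W k
  rw [Wallis.W_eq_inv_centralBinom_sq] at hW
  set x := (4 : ℝ)⁻¹ ^ k * Nat.centralBinom k
  have hx : 0 < x := inv_four_pow_mul_centralBinom_pos k
  rw [le_inv_comm₀ (by positivity) (by positivity)] at hW
  field_simp at hW
  rw [← one_div, le_div_iff₀ (by positivity)]
  nlinarith [pi_pos]

/-- For the sequence defined by `f 0 = 1` and `f k = (1 - 1/(2k)) * f (k-1)` for `k ≥ 1`,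
one has the closed form `f k = 4⁻ᵏ * (2k choose k)` for all `k ≥ 0`, and for every `k ≥ 1`
the two-sided bound `1/√(π(k+1)) ≤ f k ≤ 1/√(π k)`. -/
theorem fhu_closed_form_and_bounds (f : ℕ → ℝ)
    (hf0 : f 0 = 1)
    (hf : ∀ k : ℕ, 1 ≤ k → f k = (1 - 1 / (2 * (k : ℝ))) * f (k - 1)) :
    (∀ k : ℕ, f k = (4 : ℝ)⁻¹ ^ k * (Nat.choose (2 * k) k : ℝ)) ∧
    (∀ k : ℕ, 1 ≤ k →
      1 / Real.sqrt (Real.pi * ((k : ℝ) + 1)) ≤ f k ∧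
      f k ≤ 1 / Real.sqrt (Real.pi * (k : ℝ))) := by
  have closed (k : ℕ) : f k = (4 : ℝ)⁻¹ ^ k * Nat.centralBinom k :=
    eq_inv_four_pow_mul_centralBinom hf0 (fun k => by simpa using hf (k + 1) (by omega)) k
  refine ⟨fun k => by rw [closed, Nat.centralBinom_eq_two_mul_choose], fun k hk => ?_⟩
  have hpos := (inv_four_pow_mul_centralBinom_pos k).le
  simp only [closed, one_div, ← Real.sqrt_inv]
  exact ⟨Real.sqrt_le_iff.mpr ⟨hpos, inv_pi_mul_succ_le_sq_inv_four_pow_mul_centralBinom k⟩,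
    (Real.le_sqrt hpos (by positivity)).mpr (sq_inv_four_pow_mul_centralBinom_le_inv_pi_mul hk)⟩
end

section
/- For the sequence defined by f_0 = 1 and f_k = (1 - 1/(2k)) f_{k-1} for k ≥ 1, for every integer n ≥ 0 the convolution identity Σ_{k=0}^{n} f_k * f_{n-k} = 1 holds. -/
/-!
Write `S n = ∑_{i+j=n} f i f j` and `T n = ∑_{i+j=n} i f i f j`. Swapping `i` and `j` gives
`2 T n = n S n`. The recurrence `2 (k+1) f (k+1) = (2k+1) f k` turns `2 T (n+1)` into
`∑_{i+j=n} (2i+1) f i f j = 2 T n + S n = (n+1) S n`, so `(n+1) S (n+1) = (n+1) S n`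
and `S` is constant, equal to `S 0 = f 0 ^ 2`.
-/

open Finset

namespace Finset.Nat

theorem two_mul_sum_antidiagonal_fst_mul {R : Type*} [CommSemiring R] (f : ℕ → R) (n : ℕ) :
    2 * ∑ p ∈ antidiagonal n, (p.1 : R) * (f p.1 * f p.2) =
      n * ∑ p ∈ antidiagonal n, f p.1 * f p.2 := by
  have hswap : ∑ p ∈ antidiagonal n, (p.1 : R) * (f p.1 * f p.2) =
      ∑ p ∈ antidiagonal n, (p.2 : R) * (f p.1 * f p.2) := by
    rw [← sum_antidiagonal_swap]
    exact sum_congr rfl fun p _ => by simp only [Prod.fst_swap, Prod.snd_swap]; ring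
  rw [two_mul]
  nth_rw 2 [hswap]
  rw [← sum_add_distrib, mul_sum]
  refine sum_congr rfl fun p hp => ?_
  rw [← add_mul, ← Nat.cast_add, mem_antidiagonal.mp hp]

variable {R : Type*} [CommRing R] [IsDomain R] [CharZero R]

theorem sum_antidiagonal_mul_eq_sq_of_recurrence (f : ℕ → R)
    (hf : ∀ k : ℕ, 2 * (k + 1) * f (k + 1) = (2 * k + 1) * f k) (n : ℕ) :
    ∑ p ∈ antidiagonal n, f p.1 * f p.2 = f 0 ^ 2 := by
  induction n with
  | zero => simp [sq]
  | succ n ih =>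
    have hshift : 2 * ∑ p ∈ antidiagonal (n + 1), (p.1 : R) * (f p.1 * f p.2) =
        (n + 1) * ∑ p ∈ antidiagonal n, f p.1 * f p.2 := by
      rw [sum_antidiagonal_succ, mul_add, mul_sum]
      have hterm : ∀ p ∈ antidiagonal n, 2 * (((p.1 + 1 : ℕ) : R) * (f (p.1 + 1) * f p.2)) =
          2 * ((p.1 : R) * (f p.1 * f p.2)) + f p.1 * f p.2 := by
        intro p _
        push_cast
        linear_combination f p.2 * hf p.1
      rw [sum_congr rfl hterm, sum_add_distrib, ← mul_sum, two_mul_sum_antidiagonal_fst_mul]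
      push_cast
      ring
    rw [two_mul_sum_antidiagonal_fst_mul] at hshift
    rw [← ih]
    exact mul_left_cancel₀ (Nat.cast_add_one_ne_zero n) (by exact_mod_cast hshift)

end Finset.Nat

/-- For the sequence defined by `f 0 = 1` and `f k = (1 - 1/(2k)) * f (k-1)` for `k ≥ 1`,
for every integer `n ≥ 0` the convolution identity `∑_{k=0}^{n} f k * f (n-k) = 1` holds. -/
theorem fhu_convolution (f : ℕ → ℝ)
    (hf0 : f 0 = 1)
    (hf : ∀ k : ℕ, 1 ≤ k → f k = (1 - 1 / (2 * (k : ℝ))) * f (k - 1)) :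
    ∀ n : ℕ, ∑ k ∈ Finset.range (n + 1), f k * f (n - k) = 1 := by
  have hrec (k : ℕ) : 2 * (k + 1) * f (k + 1) = (2 * k + 1) * f k := by
    rw [hf (k + 1) k.succ_pos]
    push_cast
    field_simp
    ring
  intro n
  rw [← Nat.sum_antidiagonal_eq_sum_range_succ (fun i j => f i * f j),
    Nat.sum_antidiagonal_mul_eq_sq_of_recurrence f hrec, hf0, one_pow]
end

section
/- For the sequence defined by f_0 = 1 and f_k = (1 - 1/(2k)) f_{k-1} for k ≥ 1, for every integer n ≥ 2 one has (γ + log n - 1)/π ≤ Σ_{k=1}^{n-1} f_k^2 ≤ (γ + log n)/π, where γ is the Euler–Mascheroni constant and log denotes the natural logarithm. -/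
/-!
By induction `f k = C(2k, k) / 4 ^ k`, and Wallis' comparison of the integrals of consecutive
powers of `sin` over `[0, π]` squeezes `π f_k²` between `2 / (2k + 1)` and `1 / k`. Summing over
`1 ≤ k < n` puts the sum between `(H_n - 1) / π` and `H_(n-1) / π`, and `γ` lies between
`H_(n-1) - log n` and `H_n - log n` since these sequences increase and decrease to `γ`.
-/

open Real Finset

theorem Nat.centralBinom_div_four_pow_pos (k : ℕ) : (0 : ℝ) < centralBinom k / 4 ^ k :=
  _root_.div_pos (mod_cast k.centralBinom_pos) (by positivity)

theorem Nat.centralBinom_succ_div_four_pow (k : ℕ) :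
    ((k + 1).centralBinom : ℝ) / 4 ^ (k + 1) =
      (2 * k + 1) / (2 * k + 2) * (centralBinom k / 4 ^ k) := by
  have h : ((k : ℝ) + 1) * centralBinom (k + 1) = 2 * (2 * k + 1) * centralBinom k := by
    exact_mod_cast succ_mul_centralBinom_succ k
  field_simp
  linear_combination (4 : ℝ) ^ k * 2 * h

theorem eq_centralBinom_div_four_pow {f : ℕ → ℝ} (hf0 : f 0 = 1)
    (hf : ∀ k : ℕ, 1 ≤ k → f k = (1 - 1 / (2 * (k : ℝ))) * f (k - 1)) (k : ℕ) :
    f k = k.centralBinom / 4 ^ k := by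
  induction k with
  | zero => simp [hf0]
  | succ k ih =>
    rw [hf (k + 1) k.succ_pos, Nat.add_sub_cancel, ih, Nat.centralBinom_succ_div_four_pow]
    push_cast
    field_simp
    ring

theorem Real.Wallis.W_eq_inv_centralBinom_div_four_pow_sq (k : ℕ) :
    W k = ((2 * k + 1) * ((k.centralBinom : ℝ) / 4 ^ k) ^ 2)⁻¹ := by
  induction k with
  | zero => simp [W]
  | succ k ih =>
    have := k.centralBinom_div_four_pow_pos
    rw [W_succ, ih, Nat.centralBinom_succ_div_four_pow]
    push_cast
    field_simp
    ring

theorem two_le_pi_mul_centralBinom_div_four_pow_sq (k : ℕ) :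
    2 ≤ π * (2 * k + 1) * ((k.centralBinom : ℝ) / 4 ^ k) ^ 2 := by
  have := k.centralBinom_div_four_pow_pos
  have h := Wallis.W_le k
  rw [Wallis.W_eq_inv_centralBinom_div_four_pow_sq, inv_le_comm₀ (by positivity) (by positivity),
    inv_div, div_le_iff₀ pi_pos] at h
  linarith

theorem pi_mul_centralBinom_div_four_pow_sq_le (k : ℕ) :
    π * k * ((k.centralBinom : ℝ) / 4 ^ k) ^ 2 ≤ 1 := by
  have := k.centralBinom_div_four_pow_pos
  have h := Wallis.le_W k
  rw [Wallis.W_eq_inv_centralBinom_div_four_pow_sq, ← one_div, le_div_iff₀ (by positivity)] at h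
  generalize (k.centralBinom : ℝ) / 4 ^ k = c at h ⊢
  field_simp at h
  -- `h` reads `π (2k+1)² c² ≤ 4 (k+1)`, and `4 k (k+1) ≤ (2k+1)²`
  nlinarith [mul_nonneg pi_pos.le (sq_nonneg c)]

theorem harmonic_le_eulerMascheroniConstant_add_log (n : ℕ) :
    harmonic n ≤ eulerMascheroniConstant + log (n + 1) := by
  have := eulerMascheroniSeq_lt_eulerMascheroniConstant n
  rw [eulerMascheroniSeq] at this
  linarith

theorem eulerMascheroniConstant_add_log_le_harmonic {n : ℕ} (hn : n ≠ 0) :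
    eulerMascheroniConstant + log n ≤ harmonic n := by
  have := eulerMascheroniConstant_lt_eulerMascheroniSeq' n
  rw [eulerMascheroniSeq', if_neg hn] at this
  linarith

theorem sum_centralBinom_div_four_pow_sq_le (m : ℕ) :
    ∑ k ∈ range m, (((k + 1).centralBinom : ℝ) / 4 ^ (k + 1)) ^ 2 ≤ harmonic m / π := by
  rw [harmonic]
  push_cast
  rw [sum_div]
  refine sum_le_sum fun k _ => ?_
  have h := pi_mul_centralBinom_div_four_pow_sq_le (k + 1)
  push_cast at h
  rw [← one_div, div_div, le_div_iff₀ (by positivity)]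
  linarith

theorem harmonic_succ_sub_one_div_le_sum_centralBinom_div_four_pow_sq (m : ℕ) :
    (harmonic (m + 1) - 1) / π ≤
      ∑ k ∈ range m, (((k + 1).centralBinom : ℝ) / 4 ^ (k + 1)) ^ 2 := by
  rw [harmonic, sum_range_succ']
  push_cast
  rw [inv_one, add_sub_cancel_right, sum_div]
  refine sum_le_sum fun k _ => ?_
  have h := two_le_pi_mul_centralBinom_div_four_pow_sq (k + 1)
  have hc := (k + 1).centralBinom_div_four_pow_pos
  rw [← one_div, div_div, div_le_iff₀ (by positivity)]
  push_cast at h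
  nlinarith [mul_pos pi_pos (pow_pos hc 2)]

/-- For the sequence defined by `f 0 = 1` and `f k = (1 - 1/(2k)) * f (k-1)` for `k ≥ 1`,
for every integer `n ≥ 2`,
`(γ + log n - 1)/π ≤ ∑_{k=1}^{n-1} (f k)^2 ≤ (γ + log n)/π`,
where `γ` is the Euler–Mascheroni constant. -/
theorem fhu_sum_of_squares_bounds (f : ℕ → ℝ)
    (hf0 : f 0 = 1)
    (hf : ∀ k : ℕ, 1 ≤ k → f k = (1 - 1 / (2 * (k : ℝ))) * f (k - 1)) :
    ∀ n : ℕ, 2 ≤ n →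
      (Real.eulerMascheroniConstant + Real.log n - 1) / Real.pi ≤
          ∑ k ∈ Finset.Ico 1 n, (f k) ^ 2 ∧
        ∑ k ∈ Finset.Ico 1 n, (f k) ^ 2 ≤
          (Real.eulerMascheroniConstant + Real.log n) / Real.pi := by
  intro n hn
  obtain ⟨m, rfl⟩ : ∃ m, n = m + 1 := ⟨n - 1, by omega⟩
  have hsum : ∑ k ∈ Ico 1 (m + 1), f k ^ 2 =
      ∑ k ∈ range m, (((k + 1).centralBinom : ℝ) / 4 ^ (k + 1)) ^ 2 := by
    simp only [sum_Ico_eq_sum_range, Nat.add_sub_cancel, add_comm 1,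
      eq_centralBinom_div_four_pow hf0 hf]
  rw [hsum, Nat.cast_add_one]
  constructor
  · refine le_trans ?_ (harmonic_succ_sub_one_div_le_sum_centralBinom_div_four_pow_sq m)
    gcongr
    exact_mod_cast eulerMascheroniConstant_add_log_le_harmonic m.succ_ne_zero
  · refine (sum_centralBinom_div_four_pow_sq_le m).trans ?_
    gcongr
    exact harmonic_le_eulerMascheroniConstant_add_log m
end

section
/- Let (f_k)_{k≥0} be defined by f_0 = 1 and f_k = (1 - 1/(2k)) f_{k-1} for k ≥ 1, and let F = M(f, n) be the n×n lower triangular Toeplitz matrix with F_{i,j} = f_{i-j} for i ≥ j and 0 otherwise. Then F · F = A^{(n)}, where A^{(n)} is the n×n lower triangular matrix of all ones (A^{(n)}_{i,j} = 1 if i ≥ j and 0 otherwise). -/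
/-- The `n × n` lower triangular Toeplitz matrix generated by a real sequence `s`. -/
def LTToeplitz (s : ℕ → ℝ) (n : ℕ) : Matrix (Fin n) (Fin n) ℝ :=
  Matrix.of fun i j => if (j : ℕ) ≤ (i : ℕ) then s ((i : ℕ) - (j : ℕ)) else 0

/-- The `n × n` lower triangular all-ones matrix. -/
def allOnesLT (n : ℕ) : Matrix (Fin n) (Fin n) ℝ :=
  Matrix.of fun i j => if (j : ℕ) ≤ (i : ℕ) then 1 else 0

/-- Moment identity: by symmetry, `∑ 2j f_j f_{m-j} = m ∑ f_j f_{m-j}`. -/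
lemma moment_eq (f : ℕ → ℝ) (m : ℕ) :
    ∑ j ∈ Finset.range (m + 1), (2 * (j : ℝ)) * (f j * f (m - j))
      = (m : ℝ) * ∑ j ∈ Finset.range (m + 1), f j * f (m - j) := by
  have hrefl := Finset.sum_range_reflect
    (fun j => (2 * (j : ℝ)) * (f j * f (m - j))) (m + 1)
  have h2 : (2 : ℝ) * (∑ j ∈ Finset.range (m + 1), (2 * (j : ℝ)) * (f j * f (m - j)))
      = (2 * (m : ℝ)) * ∑ j ∈ Finset.range (m + 1), f j * f (m - j) := by
    rw [two_mul]
    nth_rewrite 1 [← hrefl]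
    rw [← Finset.sum_add_distrib, Finset.mul_sum]
    apply Finset.sum_congr rfl
    intro j hj
    have hjm : j ≤ m := by simpa [Nat.lt_succ_iff] using hj
    have h1 : m + 1 - 1 - j = m - j := by omega
    have h2 : m - (m - j) = j := by omega
    have h3 : ((m - j : ℕ) : ℝ) = (m : ℝ) - j := by
      push_cast [Nat.cast_sub hjm]; ring
    rw [h1, h2, h3]
    ring
  linarith

/-- The key convolution identity. -/
lemma conv_one (f : ℕ → ℝ) (hf0 : f 0 = 1)
    (hf : ∀ k : ℕ, 1 ≤ k → f k = (1 - 1 / (2 * (k : ℝ))) * f (k - 1)) :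
    ∀ m : ℕ, ∑ j ∈ Finset.range (m + 1), f j * f (m - j) = 1 := by
  intro m
  induction m with
  | zero => simp [hf0]
  | succ m ih =>
    have key : ∑ j ∈ Finset.range (m + 2), (2 * (j : ℝ)) * (f j * f (m + 1 - j))
        = ((m : ℝ) + 1) * 1 := by
      rw [Finset.sum_range_succ']
      simp only [Nat.cast_zero, mul_zero, zero_mul, add_zero]
      have step : ∀ j ∈ Finset.range (m + 1),
          (2 * ((j + 1 : ℕ) : ℝ)) * (f (j + 1) * f (m + 1 - (j + 1)))
            = (2 * (j : ℝ) + 1) * (f j * f (m - j)) := by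
        intro j hj
        have h1 : m + 1 - (j + 1) = m - j := by omega
        have hne : (2 * ((j : ℝ) + 1)) ≠ 0 := by positivity
        have hrec := hf (j + 1) (by omega)
        simp only [Nat.add_sub_cancel] at hrec
        rw [h1, hrec]
        push_cast
        field_simp
        ring
      calc ∑ j ∈ Finset.range (m + 1),
            (2 * ((j + 1 : ℕ) : ℝ)) * (f (j + 1) * f (m + 1 - (j + 1)))
          = ∑ j ∈ Finset.range (m + 1), (2 * (j : ℝ) + 1) * (f j * f (m - j)) := by
            apply Finset.sum_congr rfl
            intro j hj
            have := step j hj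
            push_cast at this ⊢
            exact this
        _ = (∑ j ∈ Finset.range (m + 1), (2 * (j : ℝ)) * (f j * f (m - j)))
              + ∑ j ∈ Finset.range (m + 1), f j * f (m - j) := by
            rw [← Finset.sum_add_distrib]
            apply Finset.sum_congr rfl
            intro j _; ring
        _ = (m : ℝ) * 1 + 1 := by rw [moment_eq, ih]
        _ = ((m : ℝ) + 1) * 1 := by ring
    have hm := moment_eq f (m + 1)
    push_cast at hm key
    rw [key] at hm
    have hpos : ((m : ℝ) + 1) ≠ 0 := by positivity
    field_simp at hm
    linarith [hm]

/-- For the sequence `f 0 = 1`, `f k = (1 - 1/(2k)) f (k-1)`, the lower triangular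
Toeplitz matrix `F = M(f, n)` satisfies `F * F = A⁽ⁿ⁾`, the lower triangular
all-ones matrix. -/
theorem fhu_factorization (f : ℕ → ℝ)
    (hf0 : f 0 = 1)
    (hf : ∀ k : ℕ, 1 ≤ k → f k = (1 - 1 / (2 * (k : ℝ))) * f (k - 1))
    (n : ℕ) :
    LTToeplitz f n * LTToeplitz f n = allOnesLT n := by
  ext i j
  simp only [Matrix.mul_apply, LTToeplitz, allOnesLT, Matrix.of_apply]
  rw [Fin.sum_univ_eq_sum_range
    (fun k => (if k ≤ (i : ℕ) then f ((i : ℕ) - k) else 0) *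
      (if (j : ℕ) ≤ k then f (k - (j : ℕ)) else 0))]
  by_cases hij : (j : ℕ) ≤ (i : ℕ)
  · rw [if_pos hij]
    have hstep : ∀ k ∈ Finset.range n,
        (if k ≤ (i : ℕ) then f ((i : ℕ) - k) else 0) *
          (if (j : ℕ) ≤ k then f (k - (j : ℕ)) else 0)
        = if k ∈ Finset.Icc (j : ℕ) (i : ℕ) then f ((i : ℕ) - k) * f (k - (j : ℕ)) else 0 := by
      intro k _
      by_cases h1 : k ≤ (i : ℕ) <;> by_cases h2 : (j : ℕ) ≤ k <;>
        simp [h1, h2, Finset.mem_Icc]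
    rw [Finset.sum_congr rfl hstep, Finset.sum_ite_mem]
    have hsub : Finset.range n ∩ Finset.Icc (j : ℕ) (i : ℕ) = Finset.Icc (j : ℕ) (i : ℕ) := by
      apply Finset.inter_eq_right.mpr
      intro k hk
      simp only [Finset.mem_Icc] at hk
      simp only [Finset.mem_range]
      exact lt_of_le_of_lt hk.2 i.isLt
    rw [hsub]
    have hre : ∑ k ∈ Finset.Icc (j : ℕ) (i : ℕ), f ((i : ℕ) - k) * f (k - (j : ℕ))
        = ∑ t ∈ Finset.range ((i : ℕ) - (j : ℕ) + 1),
            f ((i : ℕ) - (j : ℕ) - t) * f t := by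
      apply Finset.sum_nbij' (fun k => k - (j : ℕ)) (fun t => t + (j : ℕ))
      · intro k hk; simp only [Finset.mem_Icc] at hk; simp only [Finset.mem_range]; omega
      · intro t ht; simp only [Finset.mem_range] at ht; simp only [Finset.mem_Icc]; omega
      · intro k hk; simp only [Finset.mem_Icc] at hk; omega
      · intro t ht; simp only [Finset.mem_range] at ht; omega
      · intro k hk
        simp only [Finset.mem_Icc] at hk
        have e1 : (i : ℕ) - (j : ℕ) - (k - (j : ℕ)) = (i : ℕ) - k := by omega
        rw [e1]
    rw [hre]
    have := conv_one f hf0 hf ((i : ℕ) - (j : ℕ))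
    calc ∑ t ∈ Finset.range ((i : ℕ) - (j : ℕ) + 1),
            f ((i : ℕ) - (j : ℕ) - t) * f t
        = ∑ t ∈ Finset.range ((i : ℕ) - (j : ℕ) + 1),
            f t * f ((i : ℕ) - (j : ℕ) - t) := by
          apply Finset.sum_congr rfl; intro t _; ring
      _ = 1 := conv_one f hf0 hf _
  · rw [if_neg hij]
    apply Finset.sum_eq_zero
    intro k _
    by_cases h1 : k ≤ (i : ℕ)
    · have h2 : ¬ (j : ℕ) ≤ k := by omega
      simp [h2]
    · simp [h1]
end

section
/- Fix an integer n ≥ 1 and let (f_k) be defined by f_0 = 1 and f_k = (1 - 1/(2k)) f_{k-1} for k ≥ 1. For any vectors b, c ∈ ℝ^n satisfying the constraints Σ_{i=0}^{k} b_i * c_{k-i} = 1 for every 0 ≤ k < n, one has ‖b‖_2 · ‖c‖_2 ≥ Σ_{k=0}^{n-1} f_k^2. Moreover the choice b = c = (f_0, f_1, ..., f_{n-1}) satisfies the constraints and attains equality, so the minimum of ‖b‖_2 ‖c‖_2 over all feasible (b, c) equals Σ_{k=0}^{n-1} f_k^2. -/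
/-!
The weights are `f k = (2k choose k) / 4 ^ k`, the coefficients of `(1 - x) ^ (-1/2)`, so that
`f * f = 1` as a convolution and the backward differences `g` of `f`, the coefficients of
`(1 - x) ^ (1/2)`, satisfy `f * g = δ₀`. The Hankel matrix `W j l = w (j + l)` with
`w m = ∑ i < n - m, f (m + i) g i` (zero for `m ≥ n`) is entrywise nonnegative because `f` is
positive and decreasing, and `W f = f` because `f * g = δ₀`. For every feasible pair
`∑ j l, W j l b j c l = ∑ m, w m (b * c) m = ∑ m, w m`; for `b = c = f` this common value is
`⟨f, W f⟩ = ∑ k, f k ^ 2`. The Schur test with the positive eigenvector `f` bounds the bilinear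
form of `W` by `‖b‖ ‖c‖`.
-/

open Finset

section BackDiff

variable {R : Type*} [CommRing R]

def backDiff (f : ℕ → R) : ℕ → R
  | 0 => f 0
  | k + 1 => f (k + 1) - f k

theorem sum_range_succ_backDiff (f : ℕ → R) (m : ℕ) :
    ∑ i ∈ range (m + 1), backDiff f i = f m := by
  rw [sum_range_succ']
  simp only [backDiff, sum_range_sub]
  ring

theorem sum_mul_backDiff_succ (h f : ℕ → R) (k : ℕ) :
    ∑ i ∈ range (k + 2), h i * backDiff f (k + 1 - i) =
      ∑ i ∈ range (k + 2), h i * f (k + 1 - i) - ∑ i ∈ range (k + 1), h i * f (k - i) := by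
  rw [sum_range_succ, sum_range_succ (fun i => h i * f (k + 1 - i)), Nat.sub_self]
  have hbody : ∀ i ∈ range (k + 1),
      h i * backDiff f (k + 1 - i) = h i * f (k + 1 - i) - h i * f (k - i) := by
    intro i hi
    rw [show k + 1 - i = k - i + 1 by have := mem_range.1 hi; omega, backDiff]
    ring
  rw [sum_congr rfl hbody, sum_sub_distrib, backDiff]
  ring

theorem sum_mul_backDiff_eq_ite {f : ℕ → R}
    (hconv : ∀ k, ∑ i ∈ range (k + 1), f i * f (k - i) = 1) (k : ℕ) :
    ∑ i ∈ range (k + 1), f i * backDiff f (k - i) = if k = 0 then 1 else 0 := by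
  cases k with
  | zero => simpa [backDiff] using hconv 0
  | succ k => rw [sum_mul_backDiff_succ, hconv, hconv, sub_self, if_neg k.succ_ne_zero]

end BackDiff

theorem schur_test {ι κ R : Type*} [Field R] [LinearOrder R] [IsStrictOrderedRing R]
    (s : Finset ι) (t : Finset κ) (W : ι → κ → R) (p : ι → R) (q : κ → R)
    (hW : ∀ i ∈ s, ∀ j ∈ t, 0 ≤ W i j) (hp : ∀ i ∈ s, 0 < p i) (hq : ∀ j ∈ t, 0 < q j)
    (hrow : ∀ i ∈ s, ∑ j ∈ t, W i j * q j ≤ p i) (hcol : ∀ j ∈ t, ∑ i ∈ s, W i j * p i ≤ q j)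
    (x : ι → R) (y : κ → R) :
    (∑ i ∈ s, ∑ j ∈ t, W i j * (x i * y j)) ^ 2 ≤ (∑ i ∈ s, x i ^ 2) * ∑ j ∈ t, y j ^ 2 := by
  have hx : ∑ i ∈ s, ∑ j ∈ t, W i j * (q j / p i * x i ^ 2) ≤ ∑ i ∈ s, x i ^ 2 := by
    refine sum_le_sum fun i hi => ?_
    calc ∑ j ∈ t, W i j * (q j / p i * x i ^ 2)
        = x i ^ 2 / p i * ∑ j ∈ t, W i j * q j := by
          rw [mul_sum]; exact sum_congr rfl fun j _ => by ring
      _ ≤ x i ^ 2 / p i * p i := by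
          gcongr
          · exact div_nonneg (sq_nonneg _) (hp i hi).le
          · exact hrow i hi
      _ = x i ^ 2 := div_mul_cancel₀ _ (hp i hi).ne'
  have hy : ∑ i ∈ s, ∑ j ∈ t, W i j * (p i / q j * y j ^ 2) ≤ ∑ j ∈ t, y j ^ 2 := by
    rw [sum_comm]
    refine sum_le_sum fun j hj => ?_
    calc ∑ i ∈ s, W i j * (p i / q j * y j ^ 2)
        = y j ^ 2 / q j * ∑ i ∈ s, W i j * p i := by
          rw [mul_sum]; exact sum_congr rfl fun i _ => by ring
      _ ≤ y j ^ 2 / q j * q j := by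
          gcongr
          · exact div_nonneg (sq_nonneg _) (hq j hj).le
          · exact hcol j hj
      _ = y j ^ 2 := div_mul_cancel₀ _ (hq j hj).ne'
  simp_rw [← sum_product'] at hx hy ⊢
  have hpos : ∀ a ∈ s ×ˢ t, 0 ≤ W a.1 a.2 ∧ 0 < p a.1 ∧ 0 < q a.2 := fun a ha => by
    rw [mem_product] at ha
    exact ⟨hW _ ha.1 _ ha.2, hp _ ha.1, hq _ ha.2⟩
  have hv : ∀ a ∈ s ×ˢ t, 0 ≤ W a.1 a.2 * (p a.1 / q a.2 * y a.2 ^ 2) := fun a ha => by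
    obtain ⟨hWa, hpa, hqa⟩ := hpos a ha
    positivity
  refine (sum_sq_le_sum_mul_sum_of_sq_le_mul _ (fun a ha => ?_) hv fun a ha => ?_).trans
    (mul_le_mul hx hy (sum_nonneg hv) (sum_nonneg fun _ _ => sq_nonneg _))
  all_goals obtain ⟨hWa, hpa, hqa⟩ := hpos a ha
  · positivity
  · exact (by field_simp : _ = _).le

theorem sum_range_sum_range_eq_diag_of_eq_zero {M : Type*} [AddCommMonoid M] (n : ℕ)
    (F : ℕ → ℕ → M) (hF : ∀ j l, n ≤ j + l → F j l = 0) :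
    ∑ j ∈ range n, ∑ l ∈ range n, F j l = ∑ k ∈ range n, ∑ i ∈ range (k + 1), F i (k - i) := by
  rw [sum_range_diag_flip]
  refine sum_congr rfl fun j _ => (sum_subset (range_subset_range.2 (Nat.sub_le n j)) ?_).symm
  intro l hl hl'
  exact hF j l (by simp only [mem_range] at hl hl'; omega)

theorem sum_range_sum_range_mul_eq_of_conv_eq_one {R : Type*} [CommSemiring R] {n : ℕ}
    (w b c : ℕ → R) (hw : ∀ m, n ≤ m → w m = 0)
    (hbc : ∀ k < n, ∑ i ∈ range (k + 1), b i * c (k - i) = 1) :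
    ∑ j ∈ range n, ∑ l ∈ range n, w (j + l) * (b j * c l) = ∑ k ∈ range n, w k := by
  rw [sum_range_sum_range_eq_diag_of_eq_zero n _ fun j l h => by rw [hw _ h, zero_mul]]
  refine sum_congr rfl fun k hk => ?_
  have hsum : ∀ i ∈ range (k + 1),
      w (i + (k - i)) * (b i * c (k - i)) = w k * (b i * c (k - i)) :=
    fun i hi => by rw [Nat.add_sub_cancel' (Nat.lt_succ_iff.1 (mem_range.1 hi))]
  rw [sum_congr rfl hsum, ← mul_sum, hbc k (mem_range.1 hk), mul_one]

def hankelWeight (f : ℕ → ℝ) (n m : ℕ) : ℝ := ∑ i ∈ range (n - m), f (m + i) * backDiff f i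

section HankelWeight

variable {f : ℕ → ℝ} {n : ℕ}

theorem hankelWeight_of_le {m : ℕ} (h : n ≤ m) : hankelWeight f n m = 0 := by
  simp [hankelWeight, Nat.sub_eq_zero_of_le h]

theorem hankelWeight_nonneg (hpos : ∀ k, 0 < f k) (hf : Antitone f) (m : ℕ) :
    0 ≤ hankelWeight f n m := by
  rcases le_or_gt n m with h | h
  · exact (hankelWeight_of_le h).ge
  obtain ⟨N, hN⟩ : ∃ N, n - m = N + 1 := ⟨n - m - 1, by omega⟩
  calc 0 ≤ f m * f N := (mul_pos (hpos m) (hpos N)).le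
    _ = ∑ i ∈ range (N + 1), f m * backDiff f i := by rw [← mul_sum, sum_range_succ_backDiff]
    _ ≤ hankelWeight f n m := by
        rw [hankelWeight, hN]
        refine sum_le_sum fun i _ => ?_
        cases i with
        | zero => simp
        | succ i => exact mul_le_mul_of_nonpos_right (hf (by omega)) (sub_nonpos.2 (hf i.le_succ))

theorem sum_hankelWeight_mul (hconv : ∀ k, ∑ i ∈ range (k + 1), f i * f (k - i) = 1)
    {j : ℕ} (hj : j < n) : ∑ l ∈ range n, hankelWeight f n (j + l) * f l = f j := by
  calc ∑ l ∈ range n, hankelWeight f n (j + l) * f l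
      = ∑ l ∈ range (n - j), hankelWeight f n (j + l) * f l := by
        refine (sum_subset (range_subset_range.2 (Nat.sub_le n j)) fun l _ hl => ?_).symm
        rw [hankelWeight_of_le (by simp only [mem_range] at hl; omega), zero_mul]
    _ = ∑ l ∈ range (n - j), ∑ i ∈ range (n - j - l), f l * backDiff f i * f (j + (l + i)) := by
        refine sum_congr rfl fun l _ => ?_
        rw [hankelWeight, Nat.sub_sub, sum_mul]
        exact sum_congr rfl fun i _ => by rw [add_assoc]; ring
    _ = ∑ k ∈ range (n - j), f (j + k) * ∑ i ∈ range (k + 1), f i * backDiff f (k - i) := by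
        rw [← sum_range_diag_flip]
        refine sum_congr rfl fun k _ => ?_
        rw [mul_sum]
        refine sum_congr rfl fun i hi => ?_
        rw [Nat.add_sub_cancel' (Nat.lt_succ_iff.1 (mem_range.1 hi))]
        ring
    _ = f j := by
        simp only [sum_mul_backDiff_eq_ite hconv, mul_ite, mul_one, mul_zero, sum_ite_eq',
          mem_range, Nat.sub_pos_of_lt hj, if_true, add_zero]

theorem sq_sum_sq_le_of_conv_eq_one (hpos : ∀ k, 0 < f k) (hf : Antitone f)
    (hconv : ∀ k, ∑ i ∈ range (k + 1), f i * f (k - i) = 1) (b c : ℕ → ℝ)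
    (hbc : ∀ k < n, ∑ i ∈ range (k + 1), b i * c (k - i) = 1) :
    (∑ k ∈ range n, f k ^ 2) ^ 2 ≤ (∑ k ∈ range n, b k ^ 2) * ∑ k ∈ range n, c k ^ 2 := by
  have hw : ∀ m, n ≤ m → hankelWeight f n m = 0 := fun m => hankelWeight_of_le
  have hrow : ∀ j ∈ range n, ∑ l ∈ range n, hankelWeight f n (j + l) * f l = f j :=
    fun j hj => sum_hankelWeight_mul hconv (mem_range.1 hj)
  have hcol : ∀ l ∈ range n, ∑ j ∈ range n, hankelWeight f n (j + l) * f j = f l := by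
    simpa only [add_comm] using hrow
  have htotal : ∑ k ∈ range n, f k ^ 2 = ∑ k ∈ range n, hankelWeight f n k := by
    rw [← sum_range_sum_range_mul_eq_of_conv_eq_one _ f f hw fun k _ => hconv k]
    refine sum_congr rfl fun j hj => ?_
    rw [sq, ← hrow j hj, mul_sum]
    exact sum_congr rfl fun l _ => by ring
  rw [htotal, ← sum_range_sum_range_mul_eq_of_conv_eq_one _ b c hw hbc]
  exact schur_test _ _ (fun j l => hankelWeight f n (j + l)) f f
    (fun _ _ _ _ => hankelWeight_nonneg hpos hf _) (fun k _ => hpos k) (fun k _ => hpos k)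
    (fun j hj => (hrow j hj).le) (fun l hl => (hcol l hl).le) b c

end HankelWeight

theorem two_mul_sum_range_mul_mul_sub (a : ℕ → ℝ) (m : ℕ) :
    2 * ∑ i ∈ range (m + 1), (i : ℝ) * (a i * a (m - i)) =
      m * ∑ i ∈ range (m + 1), a i * a (m - i) := by
  have hreflect : ∑ i ∈ range (m + 1), (i : ℝ) * (a i * a (m - i)) =
      ∑ i ∈ range (m + 1), ((m : ℝ) - i) * (a i * a (m - i)) := by
    rw [← sum_range_reflect]
    refine sum_congr rfl fun i hi => ?_
    have him : i ≤ m := Nat.lt_succ_iff.1 (mem_range.1 hi)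
    rw [Nat.add_sub_cancel, Nat.sub_sub_self him, Nat.cast_sub him]
    ring
  rw [two_mul, mul_sum]
  nth_rw 2 [hreflect]
  rw [← sum_add_distrib]
  exact sum_congr rfl fun i _ => by ring

section CentralBinomialRatio

variable {f : ℕ → ℝ} (hf0 : f 0 = 1) (hrec : ∀ k : ℕ, 2 * (k + 1) * f (k + 1) = (2 * k + 1) * f k)
include hf0 hrec

theorem pos_of_rec (k : ℕ) : 0 < f k := by
  induction k with
  | zero => simp [hf0]
  | succ k ih =>
    have h : 0 < 2 * ((k : ℝ) + 1) * f (k + 1) := by rw [hrec k]; positivity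
    exact pos_of_mul_pos_right h (by positivity)

theorem antitone_of_rec : Antitone f := by
  refine antitone_nat_of_succ_le fun k =>
    le_of_mul_le_mul_left ?_ (by positivity : (0 : ℝ) < 2 * (k + 1))
  rw [hrec k]
  linarith [pos_of_rec hf0 hrec k]

theorem sum_mul_eq_one_of_rec (k : ℕ) : ∑ i ∈ range (k + 1), f i * f (k - i) = 1 := by
  induction k with
  | zero => simp [hf0]
  | succ k ih =>
    -- With `C m = ∑ i ≤ m, f i f (m - i)`: `(k+1) C (k+1) = 2 ∑ i ≤ k + 1, i f i f (k + 1 - i)`,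
    -- and the recurrence turns this into `2 ∑ i ≤ k, i f i f (k - i) + C k = (k + 1) C k`.
    have hshift : 2 * ∑ i ∈ range (k + 2), (i : ℝ) * (f i * f (k + 1 - i)) =
        2 * ∑ i ∈ range (k + 1), (i : ℝ) * (f i * f (k - i)) +
          ∑ i ∈ range (k + 1), f i * f (k - i) := by
      rw [mul_sum, mul_sum, ← sum_add_distrib, sum_range_succ']
      simp only [Nat.cast_zero, zero_mul, mul_zero, add_zero, Nat.cast_add, Nat.cast_one,
        Nat.add_sub_add_right]
      exact sum_congr rfl fun i _ => by linear_combination f (k - i) * hrec i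
    have hk : ((k + 1 : ℕ) : ℝ) ≠ 0 := by positivity
    apply mul_left_cancel₀ hk
    rw [← two_mul_sum_range_mul_mul_sub, hshift, two_mul_sum_range_mul_mul_sub, ih]
    push_cast
    ring

end CentralBinomialRatio

theorem fhu_optimal_lt_toeplitz_general (n : ℕ) (f : ℕ → ℝ)
    (hf0 : f 0 = 1)
    (hf : ∀ k : ℕ, 1 ≤ k → f k = (1 - 1 / (2 * (k : ℝ))) * f (k - 1)) :
    IsLeast
      { v : ℝ | ∃ b c : ℕ → ℝ,
          (∀ k : ℕ, k < n → ∑ i ∈ Finset.range (k + 1), b i * c (k - i) = 1) ∧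
          v = Real.sqrt (∑ k ∈ Finset.range n, (b k) ^ 2) *
              Real.sqrt (∑ k ∈ Finset.range n, (c k) ^ 2) }
      (∑ k ∈ Finset.range n, (f k) ^ 2) := by
  have hrec : ∀ k : ℕ, 2 * (k + 1) * f (k + 1) = (2 * k + 1) * f k := fun k => by
    rw [hf (k + 1) k.succ_pos, Nat.add_sub_cancel]
    push_cast
    field_simp
    ring
  have hconv := sum_mul_eq_one_of_rec hf0 hrec
  refine ⟨⟨f, f, fun k _ => hconv k, (Real.mul_self_sqrt (by positivity)).symm⟩, ?_⟩
  rintro _ ⟨b, c, hbc, rfl⟩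
  rw [← Real.sqrt_mul (by positivity), Real.le_sqrt (by positivity) (by positivity)]
  exact sq_sum_sq_le_of_conv_eq_one (pos_of_rec hf0 hrec) (antitone_of_rec hf0 hrec) hconv b c hbc

/-- Optimality of the Fichtenberger–Henzinger–Upadhyay coefficients: for `b, c ∈ ℝⁿ`
(represented by their first `n` entries) satisfying the constraints
`∑_{i=0}^{k} b i * c (k-i) = 1` for every `0 ≤ k < n`, one has
`‖b‖₂ ‖c‖₂ ≥ ∑_{k<n} (f k)²`; moreover `b = c = f` is feasible and attains equality,
so the minimum of `‖b‖₂ ‖c‖₂` over feasible pairs is exactly `∑_{k<n} (f k)²`. -/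
theorem fhu_optimal_lt_toeplitz (n : ℕ) (hn : 1 ≤ n) (f : ℕ → ℝ)
    (hf0 : f 0 = 1)
    (hf : ∀ k : ℕ, 1 ≤ k → f k = (1 - 1 / (2 * (k : ℝ))) * f (k - 1)) :
    IsLeast
      { v : ℝ | ∃ b c : ℕ → ℝ,
          (∀ k : ℕ, k < n → ∑ i ∈ Finset.range (k + 1), b i * c (k - i) = 1) ∧
          v = Real.sqrt (∑ k ∈ Finset.range n, (b k) ^ 2) *
              Real.sqrt (∑ k ∈ Finset.range n, (c k) ^ 2) }
      (∑ k ∈ Finset.range n, (f k) ^ 2) :=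
  fhu_optimal_lt_toeplitz_general n f hf0 hf
end

section
/- For every integer n ≥ 1, OptLTToe(n) - Opt(n) ≤ 1 + (γ - log 2)/π, and in particular OptLTToe(n) - Opt(n) ≤ 0.97, where OptLTToe(n) is the infimum of ‖B‖_{2→∞} ‖C‖_{1→2} over all pairs of n×n lower triangular Toeplitz real matrices B, C with B·C = A^{(n)}, and Opt(n) is the infimum of ‖B‖_{2→∞} ‖C‖_{1→2} over all pairs of n×n real matrices B, C with B·C = A^{(n)}. -/
open Finset in
/-- Maximum Euclidean row norm `‖B‖_{2→∞}` of a matrix. -/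
noncomputable def maxRowNorm {m n : ℕ} (B : Matrix (Fin m) (Fin n) ℝ) : ℝ :=
  ⨆ i : Fin m, Real.sqrt (∑ j, (B i j) ^ 2)

open Finset in
/-- Maximum Euclidean column norm `‖C‖_{1→2}` of a matrix. -/
noncomputable def maxColNorm {m n : ℕ} (C : Matrix (Fin m) (Fin n) ℝ) : ℝ :=
  ⨆ j : Fin n, Real.sqrt (∑ i, (C i j) ^ 2)

/-- Optimal objective over all factorizations of the all-ones lower triangular matrix. -/
noncomputable def OptGen (n : ℕ) : ℝ :=
  sInf { v : ℝ | ∃ B C : Matrix (Fin n) (Fin n) ℝ,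
    B * C = allOnesLT n ∧ v = maxRowNorm B * maxColNorm C }

/-- Optimal objective over lower triangular Toeplitz factorizations. -/
noncomputable def OptLTToe (n : ℕ) : ℝ :=
  sInf { v : ℝ | ∃ b c : ℕ → ℝ,
    LTToeplitz b n * LTToeplitz c n = allOnesLT n ∧
    v = maxRowNorm (LTToeplitz b n) * maxColNorm (LTToeplitz c n) }

open Finset Real Matrix

namespace ToeGap


/-- central binomial ratio sequence: coefficients of 1/√(1-x) -/
noncomputable def r : ℕ → ℝ
  | 0 => 1
  | k+1 => r k * (2*k+1) / (2*k+2)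

lemma r_pos (k : ℕ) : 0 < r k := by
  induction k with
  | zero => norm_num [r]
  | succ k ih => rw [r]; positivity

lemma r_succ (k : ℕ) : r (k+1) * (2*(k:ℝ)+2) = r k * (2*k+1) := by
  rw [r]; field_simp

lemma conv_sym (m : ℕ) :
    ∑ j ∈ range (m+1), (2*(j:ℝ)) * (r j * r (m - j))
      = m * ∑ j ∈ range (m+1), r j * r (m - j) := by
  have h : ∑ j ∈ range (m+1), ((m:ℝ) - j) * (r j * r (m - j))
      = ∑ j ∈ range (m+1), (j:ℝ) * (r j * r (m - j)) := by
    have h0 := Finset.sum_range_reflect (fun j => (j:ℝ) * (r j * r (m - j))) (m+1)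
    rw [← h0]
    apply Finset.sum_congr rfl
    intro j hj
    rw [mem_range] at hj
    have hj' : j ≤ m := by omega
    have e1 : m + 1 - 1 - j = m - j := by omega
    have e2 : m - (m - j) = j := by omega
    rw [e1, e2, Nat.cast_sub hj']
    ring
  rw [Finset.mul_sum]
  have h1 : ∀ j ∈ range (m+1), (m:ℝ) * (r j * r (m - j))
      = (j:ℝ)*(r j * r (m-j)) + ((m:ℝ)-j)*(r j * r (m-j)) := by intro j _; ring
  rw [Finset.sum_congr rfl h1, Finset.sum_add_distrib, h, ← Finset.sum_add_distrib]
  apply Finset.sum_congr rfl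
  intro j _; ring

lemma conv (m : ℕ) : ∑ j ∈ range (m+1), r j * r (m - j) = 1 := by
  induction m with
  | zero => simp [r]
  | succ m ih =>
    -- W_m := ∑_{j≤m} (2j+1) r j r (m-j) = (m+1) T_m  and  = (m+1) T_{m+1}
    have key : ∑ j ∈ range (m+1), (2*(j:ℝ)+1) * (r j * r (m - j))
        = ((m:ℝ)+1) * ∑ j ∈ range (m+1), r j * r (m-j) := by
      have : ∑ j ∈ range (m+1), (2*(j:ℝ)+1) * (r j * r (m - j))
          = (∑ j ∈ range (m+1), (2*(j:ℝ)) * (r j * r (m - j)))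
            + ∑ j ∈ range (m+1), r j * r (m-j) := by
        rw [← Finset.sum_add_distrib]; apply Finset.sum_congr rfl; intro j _; ring
      rw [this, conv_sym]; ring
    have key2 : ∑ j ∈ range (m+1), (2*(j:ℝ)+1) * (r j * r (m - j))
        = ((m:ℝ)+1) * ∑ j ∈ range (m+2), r j * r (m+1-j) := by
      have lhs : ∑ j ∈ range (m+1), (2*(j:ℝ)+1) * (r j * r (m - j))
          = ∑ j ∈ range (m+1), (2*((j:ℝ)+1)) * (r (j+1) * r (m - j)) := by
        apply Finset.sum_congr rfl
        intro j _
        have := r_succ j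
        nlinarith [r_pos (m - j)]
      rw [lhs]
      have rhs : ∑ j ∈ range (m+2), (2*(j:ℝ)) * (r j * r (m+1-j))
          = ∑ j ∈ range (m+1), (2*((j:ℝ)+1)) * (r (j+1) * r (m - j)) := by
        rw [Finset.sum_range_succ']
        simp only [Nat.cast_zero, Nat.cast_add, Nat.cast_one]
        have : ∀ j ∈ range (m+1), (2*((j:ℝ)+1)) * (r (j+1) * r (m+1-(j+1)))
            = (2*((j:ℝ)+1)) * (r (j+1) * r (m - j)) := by
          intro j _
          congr 3
          omega
        rw [Finset.sum_congr rfl this]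
        ring
      rw [← rhs, conv_sym (m+1)]
      push_cast
      ring
    have hm1 : ((m:ℝ)+1) ≠ 0 := by positivity
    rw [ih] at key
    have heq : ((m:ℝ)+1) * ∑ j ∈ range (m+2), r j * r (m+1-j) = ((m:ℝ)+1) * 1 := by
      rw [← key2, key]
    have := mul_left_cancel₀ hm1 heq
    simpa using this

/-- partial sums of squares -/
noncomputable def S (n : ℕ) : ℝ := ∑ k ∈ range n, r k ^ 2

lemma conv' (m : ℕ) : ∑ s ∈ range (m+1), r (m - s) * r s = 1 := by
  have h0 := Finset.sum_range_reflect (fun s => r s * r (m - s)) (m+1)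
  rw [← conv m, ← h0]
  apply Finset.sum_congr rfl
  intro s hs
  rw [mem_range] at hs
  have e1 : m + 1 - 1 - s = m - s := by omega
  have e2 : m - (m - s) = s := by omega
  rw [e1, e2, mul_comm]

lemma toe_prod (n : ℕ) : LTToeplitz r n * LTToeplitz r n = allOnesLT n := by
  ext i j
  rw [Matrix.mul_apply]
  simp only [LTToeplitz, allOnesLT, Matrix.of_apply]
  rw [Fin.sum_univ_eq_sum_range
    (fun t => (if t ≤ (i:ℕ) then r ((i:ℕ) - t) else 0) * (if (j:ℕ) ≤ t then r (t - (j:ℕ)) else 0))]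
  by_cases hij : (j:ℕ) ≤ (i:ℕ)
  · rw [if_pos hij]
    have hsub : Finset.Ico (j:ℕ) ((i:ℕ)+1) ⊆ range n := by
      intro t ht
      rw [mem_Ico] at ht
      rw [mem_range]
      omega
    rw [← Finset.sum_subset hsub ?hout]
    case hout =>
      intro t _ ht
      rw [mem_Ico, not_and_or, not_le, not_lt] at ht
      split_ifs <;> first | (exfalso; omega) | ring
    have hin : ∀ t ∈ Finset.Ico (j:ℕ) ((i:ℕ)+1),
        (if t ≤ (i:ℕ) then r ((i:ℕ) - t) else 0) * (if (j:ℕ) ≤ t then r (t - (j:ℕ)) else 0)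
        = r ((i:ℕ) - t) * r (t - (j:ℕ)) := by
      intro t ht
      rw [mem_Ico] at ht
      rw [if_pos (by omega), if_pos (by omega)]
    rw [Finset.sum_congr rfl hin, Finset.sum_Ico_eq_sum_range]
    have hlen : (i:ℕ) + 1 - (j:ℕ) = ((i:ℕ) - (j:ℕ)) + 1 := by omega
    rw [hlen]
    have : ∀ s ∈ range (((i:ℕ) - (j:ℕ)) + 1),
        r ((i:ℕ) - ((j:ℕ) + s)) * r ((j:ℕ) + s - (j:ℕ))
        = r (((i:ℕ) - (j:ℕ)) - s) * r s := by
      intro s hs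
      rw [mem_range] at hs
      congr 2 <;> omega
    rw [Finset.sum_congr rfl this, conv']
  · rw [if_neg hij]
    apply Finset.sum_eq_zero
    intro t _
    split_ifs <;> first | (exfalso; omega) | ring

lemma S_nonneg (n : ℕ) : 0 ≤ S n := by
  apply Finset.sum_nonneg; intro k _; positivity

lemma maxRowNorm_nonneg {m n : ℕ} (B : Matrix (Fin m) (Fin n) ℝ) : 0 ≤ maxRowNorm B :=
  Real.iSup_nonneg fun _ => Real.sqrt_nonneg _

lemma maxColNorm_nonneg {m n : ℕ} (B : Matrix (Fin m) (Fin n) ℝ) : 0 ≤ maxColNorm B :=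
  Real.iSup_nonneg fun _ => Real.sqrt_nonneg _

lemma maxRowNorm_toe_le (n : ℕ) (hn : 1 ≤ n) : maxRowNorm (LTToeplitz r n) ≤ Real.sqrt (S n) := by
  have : Nonempty (Fin n) := ⟨⟨0, hn⟩⟩
  apply ciSup_le
  intro i
  apply Real.sqrt_le_sqrt
  simp only [LTToeplitz, Matrix.of_apply]
  rw [Fin.sum_univ_eq_sum_range (fun t => (if t ≤ (i:ℕ) then r ((i:ℕ) - t) else 0)^2)]
  have hsub : range ((i:ℕ)+1) ⊆ range n := by
    intro t ht; rw [mem_range] at *; omega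
  rw [← Finset.sum_subset hsub ?hout]
  case hout =>
    intro t _ ht
    rw [mem_range] at ht
    rw [if_neg (by omega)]
    ring
  have hin : ∀ t ∈ range ((i:ℕ)+1),
      (if t ≤ (i:ℕ) then r ((i:ℕ) - t) else 0)^2 = r ((i:ℕ) - t)^2 := by
    intro t ht; rw [mem_range] at ht; rw [if_pos (by omega)]
  rw [Finset.sum_congr rfl hin]
  have hrefl := Finset.sum_range_reflect (fun t => r t ^ 2) ((i:ℕ)+1)
  have : ∀ t ∈ range ((i:ℕ)+1), ((fun t => r t ^2) ((i:ℕ) + 1 - 1 - t)) = r ((i:ℕ) - t)^2 := by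
    intro t ht
    simp only []
    have e : (i:ℕ)+1-1-t = (i:ℕ)-t := by omega
    rw [e]
  rw [Finset.sum_congr rfl this] at hrefl
  rw [hrefl]
  apply Finset.sum_le_sum_of_subset_of_nonneg hsub
  intro k _ _; positivity

lemma maxColNorm_toe_le (n : ℕ) (hn : 1 ≤ n) : maxColNorm (LTToeplitz r n) ≤ Real.sqrt (S n) := by
  have : Nonempty (Fin n) := ⟨⟨0, hn⟩⟩
  apply ciSup_le
  intro j
  apply Real.sqrt_le_sqrt
  simp only [LTToeplitz, Matrix.of_apply]
  rw [Fin.sum_univ_eq_sum_range (fun t => (if (j:ℕ) ≤ t then r (t - (j:ℕ)) else 0)^2)]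
  have h1 : ∑ t ∈ range n, (if (j:ℕ) ≤ t then r (t - (j:ℕ)) else 0)^2
      = ∑ t ∈ Finset.Ico (j:ℕ) n, r (t - (j:ℕ))^2 := by
    rw [Finset.range_eq_Ico, ← Finset.sum_Ico_consecutive _ (Nat.zero_le (j:ℕ)) (le_of_lt j.2)]
    have hz : ∑ t ∈ Finset.Ico 0 (j:ℕ), (if (j:ℕ) ≤ t then r (t - (j:ℕ)) else 0)^2 = 0 := by
      apply Finset.sum_eq_zero
      intro t ht
      rw [mem_Ico] at ht
      rw [if_neg (by omega)]
      ring
    rw [hz, zero_add]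
    apply Finset.sum_congr rfl
    intro t ht
    rw [mem_Ico] at ht
    rw [if_pos (by omega)]
  rw [h1, Finset.sum_Ico_eq_sum_range]
  have : ∀ s ∈ range (n - (j:ℕ)), r ((j:ℕ) + s - (j:ℕ))^2 = r s ^2 := by
    intro s _; congr 2; omega
  rw [Finset.sum_congr rfl this]
  apply Finset.sum_le_sum_of_subset_of_nonneg
  · intro t ht; rw [mem_range] at *; omega
  · intro k _ _; positivity

lemma optLTToe_le (n : ℕ) (hn : 1 ≤ n) : OptLTToe n ≤ S n := by
  have hmem : maxRowNorm (LTToeplitz r n) * maxColNorm (LTToeplitz r n) ∈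
      { v : ℝ | ∃ b c : ℕ → ℝ, LTToeplitz b n * LTToeplitz c n = allOnesLT n ∧
        v = maxRowNorm (LTToeplitz b n) * maxColNorm (LTToeplitz c n) } :=
    ⟨r, r, toe_prod n, rfl⟩
  have hbdd : BddBelow { v : ℝ | ∃ b c : ℕ → ℝ, LTToeplitz b n * LTToeplitz c n = allOnesLT n ∧
      v = maxRowNorm (LTToeplitz b n) * maxColNorm (LTToeplitz c n) } := by
    refine ⟨0, fun v hv => ?_⟩
    obtain ⟨b, c, _, hv⟩ := hv
    rw [hv]
    exact mul_nonneg (maxRowNorm_nonneg _) (maxColNorm_nonneg _)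
  refine le_trans (csInf_le hbdd hmem) ?_
  calc maxRowNorm (LTToeplitz r n) * maxColNorm (LTToeplitz r n)
      ≤ Real.sqrt (S n) * Real.sqrt (S n) :=
        mul_le_mul (maxRowNorm_toe_le n hn) (maxColNorm_toe_le n hn)
          (maxColNorm_nonneg _) (Real.sqrt_nonneg _)
    _ = S n := Real.mul_self_sqrt (S_nonneg n)



lemma sum_cos_odd (φ : ℝ) (m : ℕ) :
    (∑ t ∈ range m, Real.cos ((2*t+1) * φ)) * (2 * Real.sin φ) = Real.sin (2*m*φ) := by
  induction m with
  | zero => simp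
  | succ m ih =>
    rw [Finset.sum_range_succ, add_mul, ih]
    have h := Real.sin_sub_sin (2*((m:ℝ)+1)*φ) (2*(m:ℝ)*φ)
    have harg1 : (2*((m:ℝ)+1)*φ - 2*(m:ℝ)*φ)/2 = φ := by ring
    have harg2 : (2*((m:ℝ)+1)*φ + 2*(m:ℝ)*φ)/2 = (2*(m:ℝ)+1)*φ := by ring
    rw [harg1, harg2] at h
    push_cast
    linarith [h]

lemma sum_cos_even (φ : ℝ) (m : ℕ) :
    (∑ t ∈ range m, Real.cos ((2*t+2) * φ)) * (2 * Real.sin φ)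
      = Real.sin ((2*m+1)*φ) - Real.sin φ := by
  induction m with
  | zero => simp
  | succ m ih =>
    rw [Finset.sum_range_succ, add_mul, ih]
    have h := Real.sin_sub_sin ((2*(m:ℝ)+3)*φ) ((2*(m:ℝ)+1)*φ)
    have harg1 : ((2*(m:ℝ)+3)*φ - (2*(m:ℝ)+1)*φ)/2 = φ := by ring
    have harg2 : ((2*(m:ℝ)+3)*φ + (2*(m:ℝ)+1)*φ)/2 = (2*(m:ℝ)+2)*φ := by ring
    rw [harg1, harg2] at h
    push_cast
    have e1 : (2*((m:ℝ)+1)+1)*φ = (2*(m:ℝ)+3)*φ := by ring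
    rw [e1]
    linarith [h]

lemma sin_theta_pos (n d : ℕ) (h1 : 1 ≤ d) (h2 : d < 2*n+1) :
    0 < Real.sin ((d:ℝ)*π/(2*(n:ℝ)+1)) := by
  apply Real.sin_pos_of_pos_of_lt_pi
  · have : 0 < (d:ℝ) := by exact_mod_cast h1
    have : 0 < 2*(n:ℝ)+1 := by positivity
    positivity
  · rw [div_lt_iff₀ (by positivity)]
    have hd : (d:ℝ) < 2*(n:ℝ)+1 := by exact_mod_cast h2
    nlinarith [Real.pi_pos]

lemma eval_odd (n d : ℕ) (h1 : 1 ≤ d) (h2 : d < 2*n+1) :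
    ∑ t ∈ range n, Real.cos ((2*t+1) * ((d:ℝ)*π/(2*(n:ℝ)+1))) = -((-1:ℝ)^d / 2) := by
  set θ := (d:ℝ)*π/(2*(n:ℝ)+1) with hθ
  have hs := sin_theta_pos n d h1 h2
  have h0 := sum_cos_odd θ n
  have harg : 2*(n:ℝ)*θ = (d:ℝ)*π - θ := by
    rw [hθ]; field_simp; ring
  rw [harg, Real.sin_nat_mul_pi_sub] at h0
  apply mul_right_cancel₀ (b := 2 * Real.sin θ) (by positivity)
  rw [h0]; ring

lemma eval_even (n d : ℕ) (h1 : 1 ≤ d) (h2 : d < 2*n+1) :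
    ∑ t ∈ range n, Real.cos ((2*t+2) * ((d:ℝ)*π/(2*(n:ℝ)+1))) = -(1/2 : ℝ) := by
  set θ := (d:ℝ)*π/(2*(n:ℝ)+1) with hθ
  have hs := sin_theta_pos n d h1 h2
  have h0 := sum_cos_even θ n
  have harg : (2*(n:ℝ)+1)*θ = (d:ℝ)*π := by
    rw [hθ]; field_simp
  rw [harg, Real.sin_nat_mul_pi] at h0
  apply mul_right_cancel₀ (b := 2 * Real.sin θ) (by positivity)
  rw [h0]; ring

lemma cos_mul_cos (a b : ℝ) : Real.cos a * Real.cos b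
    = (Real.cos (a+b) + Real.cos (a-b))/2 := by
  rw [Real.cos_add, Real.cos_sub]; ring

lemma sin_mul_sin (a b : ℝ) : Real.sin a * Real.sin b
    = (Real.cos (a-b) - Real.cos (a+b))/2 := by
  rw [Real.cos_add, Real.cos_sub]; ring

lemma neg_one_pow_sub (k l : ℕ) (h : l ≤ k) : ((-1:ℝ))^(k-l) = (-1)^(k+l) := by
  have e : k - l + 2*l = k + l := by omega
  calc ((-1:ℝ))^(k-l) = ((-1:ℝ))^(k-l) * (((-1:ℝ))^2)^l := by norm_num
    _ = (-1:ℝ)^(k-l+2*l) := by rw [← pow_mul, ← pow_add]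
    _ = (-1:ℝ)^(k+l) := by rw [e]

noncomputable def φf (n k : ℕ) : ℝ := (2*(k:ℝ)+1)*π/(2*(2*(n:ℝ)+1))

lemma sin_phi_pos (n k : ℕ) (hk : k < n) : 0 < Real.sin (φf n k) := by
  apply Real.sin_pos_of_pos_of_lt_pi
  · have : (0:ℝ) < 2*(k:ℝ)+1 := by positivity
    have : (0:ℝ) < 2*(2*(n:ℝ)+1) := by positivity
    unfold φf; positivity
  · unfold φf
    rw [div_lt_iff₀ (by positivity)]
    have hd : (k:ℝ) < n := by exact_mod_cast hk
    nlinarith [Real.pi_pos]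

lemma phi_add (n k l : ℕ) : φf n k + φf n l = ((k+l+1 : ℕ):ℝ)*π/(2*(n:ℝ)+1) := by
  unfold φf; push_cast; field_simp; ring

lemma phi_sub (n k l : ℕ) (h : l ≤ k) :
    φf n k - φf n l = ((k-l : ℕ):ℝ)*π/(2*(n:ℝ)+1) := by
  unfold φf; rw [Nat.cast_sub h]; field_simp; ring

lemma EV_diag (n k : ℕ) (hk : k < n) :
    ∑ t ∈ range n, Real.cos ((2*(t:ℝ)+1) * φf n k) * Real.cos ((2*(t:ℝ)+1) * φf n k)
      = (n:ℝ)/2 + 1/4 := by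
  have hterm : ∀ t ∈ range n,
      Real.cos ((2*(t:ℝ)+1) * φf n k) * Real.cos ((2*(t:ℝ)+1) * φf n k)
      = (Real.cos ((2*(t:ℝ)+1) * (((2*k+1:ℕ):ℝ)*π/(2*(n:ℝ)+1))) + 1)/2 := by
    intro t _
    rw [cos_mul_cos]
    have h1 : (2*(t:ℝ)+1) * φf n k + (2*(t:ℝ)+1) * φf n k
        = (2*(t:ℝ)+1) * (((2*k+1:ℕ):ℝ)*π/(2*(n:ℝ)+1)) := by
      unfold φf; push_cast; field_simp; ring
    have h2 : (2*(t:ℝ)+1) * φf n k - (2*(t:ℝ)+1) * φf n k = 0 := by ring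
    rw [h1, h2, Real.cos_zero]
  rw [Finset.sum_congr rfl hterm, ← Finset.sum_div, Finset.sum_add_distrib,
    eval_odd n (2*k+1) (by omega) (by omega)]
  have hodd : ((-1:ℝ))^(2*k+1) = -1 := Odd.neg_one_pow ⟨k, by omega⟩
  rw [hodd]
  simp [Finset.sum_const, Finset.card_range]
  ring

lemma EV_off (n k l : ℕ) (hk : k < n) (hl : l < k) :
    ∑ t ∈ range n, Real.cos ((2*(t:ℝ)+1) * φf n k) * Real.cos ((2*(t:ℝ)+1) * φf n l)
      = 0 := by
  have hterm : ∀ t ∈ range n,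
      Real.cos ((2*(t:ℝ)+1) * φf n k) * Real.cos ((2*(t:ℝ)+1) * φf n l)
      = (Real.cos ((2*(t:ℝ)+1) * (((k+l+1:ℕ):ℝ)*π/(2*(n:ℝ)+1)))
        + Real.cos ((2*(t:ℝ)+1) * (((k-l:ℕ):ℝ)*π/(2*(n:ℝ)+1))))/2 := by
    intro t _
    rw [cos_mul_cos]
    have h1 : (2*(t:ℝ)+1) * φf n k + (2*(t:ℝ)+1) * φf n l
        = (2*(t:ℝ)+1) * (((k+l+1:ℕ):ℝ)*π/(2*(n:ℝ)+1)) := by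
      rw [← mul_add, phi_add]
    have h2 : (2*(t:ℝ)+1) * φf n k - (2*(t:ℝ)+1) * φf n l
        = (2*(t:ℝ)+1) * (((k-l:ℕ):ℝ)*π/(2*(n:ℝ)+1)) := by
      rw [← mul_sub, phi_sub n k l (le_of_lt hl)]
    rw [h1, h2]
  rw [Finset.sum_congr rfl hterm, ← Finset.sum_div, Finset.sum_add_distrib,
    eval_odd n (k+l+1) (by omega) (by omega),
    eval_odd n (k-l) (by omega) (by omega),
    neg_one_pow_sub k l (le_of_lt hl), pow_succ]
  ring

lemma EU_diag (n k : ℕ) (hk : k < n) :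
    ∑ t ∈ range n, Real.sin ((2*(t:ℝ)+2) * φf n k) * Real.sin ((2*(t:ℝ)+2) * φf n k)
      = (n:ℝ)/2 + 1/4 := by
  have hterm : ∀ t ∈ range n,
      Real.sin ((2*(t:ℝ)+2) * φf n k) * Real.sin ((2*(t:ℝ)+2) * φf n k)
      = (1 - Real.cos ((2*(t:ℝ)+2) * (((2*k+1:ℕ):ℝ)*π/(2*(n:ℝ)+1))))/2 := by
    intro t _
    rw [sin_mul_sin]
    have h1 : (2*(t:ℝ)+2) * φf n k + (2*(t:ℝ)+2) * φf n k
        = (2*(t:ℝ)+2) * (((2*k+1:ℕ):ℝ)*π/(2*(n:ℝ)+1)) := by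
      unfold φf; push_cast; field_simp; ring
    have h2 : (2*(t:ℝ)+2) * φf n k - (2*(t:ℝ)+2) * φf n k = 0 := by ring
    rw [h1, h2, Real.cos_zero]
  rw [Finset.sum_congr rfl hterm, ← Finset.sum_div, Finset.sum_sub_distrib,
    eval_even n (2*k+1) (by omega) (by omega)]
  simp [Finset.sum_const, Finset.card_range]
  ring

lemma EU_off (n k l : ℕ) (hk : k < n) (hl : l < k) :
    ∑ t ∈ range n, Real.sin ((2*(t:ℝ)+2) * φf n k) * Real.sin ((2*(t:ℝ)+2) * φf n l)
      = 0 := by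
  have hterm : ∀ t ∈ range n,
      Real.sin ((2*(t:ℝ)+2) * φf n k) * Real.sin ((2*(t:ℝ)+2) * φf n l)
      = (Real.cos ((2*(t:ℝ)+2) * (((k-l:ℕ):ℝ)*π/(2*(n:ℝ)+1)))
        - Real.cos ((2*(t:ℝ)+2) * (((k+l+1:ℕ):ℝ)*π/(2*(n:ℝ)+1))))/2 := by
    intro t _
    rw [sin_mul_sin]
    have h1 : (2*(t:ℝ)+2) * φf n k + (2*(t:ℝ)+2) * φf n l
        = (2*(t:ℝ)+2) * (((k+l+1:ℕ):ℝ)*π/(2*(n:ℝ)+1)) := by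
      rw [← mul_add, phi_add]
    have h2 : (2*(t:ℝ)+2) * φf n k - (2*(t:ℝ)+2) * φf n l
        = (2*(t:ℝ)+2) * (((k-l:ℕ):ℝ)*π/(2*(n:ℝ)+1)) := by
      rw [← mul_sub, phi_sub n k l (le_of_lt hl)]
    rw [h1, h2]
  rw [Finset.sum_congr rfl hterm, ← Finset.sum_div, Finset.sum_sub_distrib,
    eval_even n (k+l+1) (by omega) (by omega),
    eval_even n (k-l) (by omega) (by omega)]
  ring


noncomputable def Umat (n : ℕ) : Matrix (Fin n) (Fin n) ℝ :=
  fun i k => (2/Real.sqrt (2*(n:ℝ)+1)) * Real.sin ((2*((i:ℕ):ℝ)+2) * φf n (k:ℕ))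

noncomputable def Vmat (n : ℕ) : Matrix (Fin n) (Fin n) ℝ :=
  fun j k => (2/Real.sqrt (2*(n:ℝ)+1)) * Real.cos ((2*((j:ℕ):ℝ)+1) * φf n (k:ℕ))

noncomputable def σf (n k : ℕ) : ℝ := 1/(2 * Real.sin (φf n k))

lemma c_sq (n : ℕ) : (2/Real.sqrt (2*(n:ℝ)+1)) * (2/Real.sqrt (2*(n:ℝ)+1))
    = 4/(2*(n:ℝ)+1) := by
  have h : Real.sqrt (2*(n:ℝ)+1) * Real.sqrt (2*(n:ℝ)+1) = 2*(n:ℝ)+1 :=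
    Real.mul_self_sqrt (by positivity)
  have hne : Real.sqrt (2*(n:ℝ)+1) ≠ 0 := by
    have : (0:ℝ) < 2*(n:ℝ)+1 := by positivity
    positivity
  field_simp
  linarith [h]

lemma V_orth (n : ℕ) : (Vmat n)ᵀ * Vmat n = 1 := by
  ext k l
  rw [Matrix.mul_apply]
  simp only [Matrix.transpose_apply, Vmat]
  have hc : ∀ j : Fin n,
      (2/Real.sqrt (2*(n:ℝ)+1)) * Real.cos ((2*((j:ℕ):ℝ)+1) * φf n (k:ℕ)) *
      ((2/Real.sqrt (2*(n:ℝ)+1)) * Real.cos ((2*((j:ℕ):ℝ)+1) * φf n (l:ℕ)))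
      = (4/(2*(n:ℝ)+1)) *
        (Real.cos ((2*((j:ℕ):ℝ)+1) * φf n (k:ℕ)) * Real.cos ((2*((j:ℕ):ℝ)+1) * φf n (l:ℕ))) := by
    intro j
    rw [← c_sq n]
    ring
  rw [Finset.sum_congr rfl (fun j _ => hc j), ← Finset.mul_sum]
  rw [Fin.sum_univ_eq_sum_range
    (fun t => Real.cos ((2*(t:ℝ)+1) * φf n (k:ℕ)) * Real.cos ((2*(t:ℝ)+1) * φf n (l:ℕ)))]
  rcases eq_or_ne k l with h | h
  · subst h
    rw [EV_diag n k k.2, Matrix.one_apply_eq]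
    have : (0:ℝ) < 2*(n:ℝ)+1 := by positivity
    field_simp
    ring
  · rw [Matrix.one_apply_ne h]
    have hkl : (k:ℕ) ≠ (l:ℕ) := fun hh => h (Fin.ext hh)
    rcases Nat.lt_or_ge (l:ℕ) (k:ℕ) with hlt | hge
    · rw [EV_off n k l k.2 hlt, mul_zero]
    · have hlt : (k:ℕ) < (l:ℕ) := by omega
      have hsym : ∑ t ∈ range n,
          Real.cos ((2*(t:ℝ)+1) * φf n (k:ℕ)) * Real.cos ((2*(t:ℝ)+1) * φf n (l:ℕ))
          = ∑ t ∈ range n,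
          Real.cos ((2*(t:ℝ)+1) * φf n (l:ℕ)) * Real.cos ((2*(t:ℝ)+1) * φf n (k:ℕ)) := by
        apply Finset.sum_congr rfl; intros; ring
      rw [hsym, EV_off n l k l.2 hlt, mul_zero]

lemma U_orth (n : ℕ) : (Umat n)ᵀ * Umat n = 1 := by
  ext k l
  rw [Matrix.mul_apply]
  simp only [Matrix.transpose_apply, Umat]
  have hc : ∀ j : Fin n,
      (2/Real.sqrt (2*(n:ℝ)+1)) * Real.sin ((2*((j:ℕ):ℝ)+2) * φf n (k:ℕ)) *
      ((2/Real.sqrt (2*(n:ℝ)+1)) * Real.sin ((2*((j:ℕ):ℝ)+2) * φf n (l:ℕ)))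
      = (4/(2*(n:ℝ)+1)) *
        (Real.sin ((2*((j:ℕ):ℝ)+2) * φf n (k:ℕ)) * Real.sin ((2*((j:ℕ):ℝ)+2) * φf n (l:ℕ))) := by
    intro j
    rw [← c_sq n]
    ring
  rw [Finset.sum_congr rfl (fun j _ => hc j), ← Finset.mul_sum]
  rw [Fin.sum_univ_eq_sum_range
    (fun t => Real.sin ((2*(t:ℝ)+2) * φf n (k:ℕ)) * Real.sin ((2*(t:ℝ)+2) * φf n (l:ℕ)))]
  rcases eq_or_ne k l with h | h
  · subst h
    rw [EU_diag n k k.2, Matrix.one_apply_eq]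
    have : (0:ℝ) < 2*(n:ℝ)+1 := by positivity
    field_simp
    ring
  · rw [Matrix.one_apply_ne h]
    rcases Nat.lt_or_ge (l:ℕ) (k:ℕ) with hlt | hge
    · rw [EU_off n k l k.2 hlt, mul_zero]
    · have hlt : (k:ℕ) < (l:ℕ) := by
        rcases Nat.lt_or_ge (k:ℕ) (l:ℕ) with h1 | h1
        · exact h1
        · exact absurd (Fin.ext (by omega)) h
      have hsym : ∑ t ∈ range n,
          Real.sin ((2*(t:ℝ)+2) * φf n (k:ℕ)) * Real.sin ((2*(t:ℝ)+2) * φf n (l:ℕ))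
          = ∑ t ∈ range n,
          Real.sin ((2*(t:ℝ)+2) * φf n (l:ℕ)) * Real.sin ((2*(t:ℝ)+2) * φf n (k:ℕ)) := by
        apply Finset.sum_congr rfl; intros; ring
      rw [hsym, EU_off n l k l.2 hlt, mul_zero]

lemma AV (n : ℕ) (i k : Fin n) :
    ∑ j, allOnesLT n i j * Vmat n j k = σf n (k:ℕ) * Umat n i k := by
  simp only [allOnesLT, Vmat, Matrix.of_apply]
  rw [Fin.sum_univ_eq_sum_range
    (fun t => (if t ≤ (i:ℕ) then (1:ℝ) else 0) *
      ((2/Real.sqrt (2*(n:ℝ)+1)) * Real.cos ((2*(t:ℝ)+1) * φf n (k:ℕ))))]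
  have hsub : range ((i:ℕ)+1) ⊆ range n := by
    intro t ht; rw [mem_range] at *; omega
  rw [← Finset.sum_subset hsub ?hout]
  case hout =>
    intro t _ ht
    rw [mem_range] at ht
    rw [if_neg (by omega)]
    ring
  have hin : ∀ t ∈ range ((i:ℕ)+1),
      (if t ≤ (i:ℕ) then (1:ℝ) else 0) *
        ((2/Real.sqrt (2*(n:ℝ)+1)) * Real.cos ((2*(t:ℝ)+1) * φf n (k:ℕ)))
      = (2/Real.sqrt (2*(n:ℝ)+1)) * Real.cos ((2*(t:ℝ)+1) * φf n (k:ℕ)) := by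
    intro t ht; rw [mem_range] at ht; rw [if_pos (by omega), one_mul]
  rw [Finset.sum_congr rfl hin, ← Finset.mul_sum]
  have hs := sin_phi_pos n (k:ℕ) k.2
  apply mul_right_cancel₀ (b := 2 * Real.sin (φf n (k:ℕ))) (by positivity)
  rw [mul_assoc, sum_cos_odd (φf n (k:ℕ)) ((i:ℕ)+1)]
  simp only [Umat, σf]
  have harg : 2*(((i:ℕ)+1:ℕ):ℝ) * φf n (k:ℕ) = (2*((i:ℕ):ℝ)+2) * φf n (k:ℕ) := by
    push_cast; ring
  rw [harg]
  field_simp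


lemma expand (n : ℕ) (W : Matrix (Fin n) (Fin n) ℝ) (hW : W * Wᵀ = 1) (x : Fin n → ℝ) :
    ∑ k, (∑ i, x i * W i k)^2 = ∑ i, (x i)^2 := by
  have hrow : ∀ a b : Fin n, (∑ k, W a k * W b k) = if a = b then (1:ℝ) else 0 := by
    intro a b
    have h := congrFun (congrFun hW a) b
    rw [Matrix.mul_apply] at h
    simpa [Matrix.transpose_apply, Matrix.one_apply] using h
  calc ∑ k, (∑ i, x i * W i k)^2
      = ∑ k, ∑ i, ∑ i', (x i * x i') * (W i k * W i' k) := by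
        apply Finset.sum_congr rfl; intro k _
        rw [sq, Finset.sum_mul_sum]
        apply Finset.sum_congr rfl; intro i _
        apply Finset.sum_congr rfl; intro i' _
        ring
    _ = ∑ i, ∑ i', (x i * x i') * ∑ k, (W i k * W i' k) := by
        rw [Finset.sum_comm]
        apply Finset.sum_congr rfl; intro i _
        rw [Finset.sum_comm]
        apply Finset.sum_congr rfl; intro i' _
        rw [Finset.mul_sum]
    _ = ∑ i, (x i)^2 := by
        apply Finset.sum_congr rfl; intro i _
        rw [Finset.sum_congr rfl (fun i' (_ : i' ∈ univ) => by
          rw [hrow i i', mul_ite, mul_one, mul_zero])]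
        rw [Finset.sum_ite_eq]
        simp [sq]

lemma sigma_sum_ge (n : ℕ) :
    (n:ℝ) * (Real.log (2*(n:ℝ)+1) / π) ≤ ∑ k : Fin n, σf n (k:ℕ) := by
  have hpi := Real.pi_pos
  have hlog : Real.log (2*(n:ℝ)+1) ≤ ∑ k ∈ range n, 2/(2*(k:ℝ)+1) := by
    have htel := Finset.sum_range_sub (f := fun k => Real.log (2*(k:ℝ)+1)) n
    have h0 : Real.log (2*((0:ℕ):ℝ)+1) = 0 := by norm_num
    rw [h0, sub_zero] at htel
    rw [← htel]
    apply Finset.sum_le_sum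
    intro k _
    have hpos1 : (0:ℝ) < 2*(k:ℝ)+1 := by positivity
    have hpos2 : (0:ℝ) < 2*((k:ℝ)+1)+1 := by positivity
    have e : Real.log (2*(((k+1):ℕ):ℝ)+1) - Real.log (2*(k:ℝ)+1)
        = Real.log ((2*(k:ℝ)+3)/(2*(k:ℝ)+1)) := by
      push_cast
      rw [Real.log_div (by positivity) (by positivity)]
      ring_nf
    rw [e]
    have := Real.log_le_sub_one_of_pos (x := (2*(k:ℝ)+3)/(2*(k:ℝ)+1)) (by positivity)
    have e2 : (2*(k:ℝ)+3)/(2*(k:ℝ)+1) - 1 = 2/(2*(k:ℝ)+1) := by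
      field_simp
      norm_num
    linarith [this, e2 ▸ this]
  have hterm : ∀ k : Fin n, (2*(n:ℝ)+1)/((2*(k:ℕ)+1)*π) ≤ σf n (k:ℕ) := by
    intro k
    have hsp := sin_phi_pos n (k:ℕ) k.2
    have hp : 0 < φf n (k:ℕ) := by
      unfold φf
      have h1 : (0:ℝ) < 2*((k:ℕ):ℝ)+1 := by positivity
      have h2 : (0:ℝ) < 2*(2*(n:ℝ)+1) := by positivity
      positivity
    have hsinle := Real.sin_le hp.le
    unfold σf
    have h2 : (0:ℝ) < 2 * Real.sin (φf n (k:ℕ)) := by positivity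
    have h3 : 2 * Real.sin (φf n (k:ℕ)) ≤ 2 * φf n (k:ℕ) := by linarith
    have h4 : 1/(2 * φf n (k:ℕ)) ≤ 1/(2 * Real.sin (φf n (k:ℕ))) :=
      one_div_le_one_div_of_le h2 h3
    have h5 : 1/(2 * φf n (k:ℕ)) = (2*(n:ℝ)+1)/((2*((k:ℕ):ℝ)+1)*π) := by
      unfold φf
      have h1 : (0:ℝ) < 2*((k:ℕ):ℝ)+1 := by positivity
      have h2' : (0:ℝ) < 2*(n:ℝ)+1 := by positivity
      field_simp
    rw [← h5]
    exact h4
  have hsum_nonneg : (0:ℝ) ≤ ∑ k ∈ range n, 2/(2*(k:ℝ)+1) := by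
    apply Finset.sum_nonneg; intro k _; positivity
  have hfrac : (n:ℝ)/π ≤ (2*(n:ℝ)+1)/(2*π) := by
    rw [div_le_div_iff₀ (by positivity) (by positivity)]
    nlinarith [hpi]
  calc (n:ℝ) * (Real.log (2*(n:ℝ)+1) / π)
      = ((n:ℝ)/π) * Real.log (2*(n:ℝ)+1) := by ring
    _ ≤ ((n:ℝ)/π) * ∑ k ∈ range n, 2/(2*(k:ℝ)+1) := by
        apply mul_le_mul_of_nonneg_left hlog (by positivity)
    _ ≤ ((2*(n:ℝ)+1)/(2*π)) * ∑ k ∈ range n, 2/(2*(k:ℝ)+1) :=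
        mul_le_mul_of_nonneg_right hfrac hsum_nonneg
    _ = ∑ k ∈ range n, (2*(n:ℝ)+1)/((2*(k:ℝ)+1)*π) := by
        rw [Finset.mul_sum]
        apply Finset.sum_congr rfl
        intro k _
        have h1 : (0:ℝ) < 2*(k:ℝ)+1 := by positivity
        field_simp
    _ = ∑ k : Fin n, (2*(n:ℝ)+1)/((2*((k:ℕ):ℝ)+1)*π) :=
        (Fin.sum_univ_eq_sum_range (fun k => (2*(n:ℝ)+1)/((2*(k:ℝ)+1)*π)) n).symm
    _ ≤ ∑ k : Fin n, σf n (k:ℕ) := Finset.sum_le_sum (fun k _ => hterm k)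

lemma optGen_ge (n : ℕ) (hn : 1 ≤ n) : Real.log (2*(n:ℝ)+1) / π ≤ OptGen n := by
  have hnR : (0:ℝ) < n := by exact_mod_cast hn
  apply le_csInf
  · exact ⟨maxRowNorm (allOnesLT n) * maxColNorm (1 : Matrix (Fin n) (Fin n) ℝ),
      allOnesLT n, 1, by rw [mul_one], rfl⟩
  rintro v ⟨B, C, hBC, rfl⟩
  set R := maxRowNorm B with hR
  set Sc := maxColNorm C with hSc
  have : Nonempty (Fin n) := ⟨⟨0, hn⟩⟩
  have hRnn : 0 ≤ R := Real.iSup_nonneg fun _ => Real.sqrt_nonneg _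
  have hScnn : 0 ≤ Sc := Real.iSup_nonneg fun _ => Real.sqrt_nonneg _
  -- diagonal identity
  set U := Umat n
  set V := Vmat n
  have hUU : U * Uᵀ = 1 := mul_eq_one_comm.mp (U_orth n)
  have hVV : V * Vᵀ = 1 := mul_eq_one_comm.mp (V_orth n)
  set P := Uᵀ * B with hP
  set Q := C * V with hQ
  have hdiag : ∀ k : Fin n, σf n (k:ℕ) = ∑ m, P k m * Q m k := by
    intro k
    have h1 : ∑ m, P k m * Q m k = (P * Q) k k := (Matrix.mul_apply).symm
    have h2 : P * Q = Uᵀ * (allOnesLT n * V) := by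
      rw [hP, hQ, Matrix.mul_assoc, ← Matrix.mul_assoc B C V, hBC]
    rw [h1, h2, Matrix.mul_apply]
    symm
    have h3 : ∀ i : Fin n, (allOnesLT n * V) i k = σf n (k:ℕ) * U i k := by
      intro i
      rw [Matrix.mul_apply]
      exact AV n i k
    calc ∑ i, Uᵀ k i * (allOnesLT n * V) i k
        = σf n (k:ℕ) * ∑ i, U i k * U i k := by
          rw [Finset.mul_sum]
          apply Finset.sum_congr rfl
          intro i _
          rw [Matrix.transpose_apply, h3 i]
          ring
      _ = σf n (k:ℕ) := by
          have h4 := congrFun (congrFun (U_orth n) k) k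
          rw [Matrix.mul_apply] at h4
          simp only [Matrix.transpose_apply, Matrix.one_apply_eq] at h4
          rw [h4, mul_one]
  -- row/column norm bounds
  have hBrow : ∀ i : Fin n, (∑ m, B i m ^ 2) ≤ R^2 := by
    intro i
    have h := le_ciSup (f := fun i : Fin n => Real.sqrt (∑ j, (B i j)^2))
      (Set.Finite.bddAbove (Set.finite_range _)) i
    have h2 : 0 ≤ ∑ j, (B i j)^2 := Finset.sum_nonneg fun _ _ => sq_nonneg _
    calc (∑ m, B i m ^ 2) = Real.sqrt (∑ m, B i m ^2) ^ 2 := (Real.sq_sqrt h2).symm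
      _ ≤ R^2 := by
          apply pow_le_pow_left₀ (Real.sqrt_nonneg _) h
  have hCcol : ∀ j : Fin n, (∑ m, C m j ^ 2) ≤ Sc^2 := by
    intro j
    have h := le_ciSup (f := fun j : Fin n => Real.sqrt (∑ i, (C i j)^2))
      (Set.Finite.bddAbove (Set.finite_range _)) j
    have h2 : 0 ≤ ∑ i, (C i j)^2 := Finset.sum_nonneg fun _ _ => sq_nonneg _
    calc (∑ m, C m j ^ 2) = Real.sqrt (∑ m, C m j ^2) ^ 2 := (Real.sq_sqrt h2).symm
      _ ≤ Sc^2 := by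
          apply pow_le_pow_left₀ (Real.sqrt_nonneg _) h
  -- Frobenius computations
  have hPsq : ∑ m : Fin n, ∑ k : Fin n, P k m ^ 2 ≤ (n:ℝ) * R^2 := by
    have hPm : ∀ m : Fin n, ∑ k, P k m ^2 = ∑ i, B i m ^2 := by
      intro m
      have := expand n U hUU (fun i => B i m)
      rw [← this]
      apply Finset.sum_congr rfl
      intro k _
      have hPe : P k m = ∑ i, B i m * U i k := by
        rw [hP, Matrix.mul_apply]
        apply Finset.sum_congr rfl
        intro i _
        rw [Matrix.transpose_apply]
        ring
      rw [hPe]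
    rw [Finset.sum_congr rfl (fun m (_ : m ∈ univ) => hPm m), Finset.sum_comm]
    calc ∑ i : Fin n, ∑ m : Fin n, B i m ^2 ≤ ∑ i : Fin n, R^2 :=
          Finset.sum_le_sum (fun i _ => hBrow i)
      _ = (n:ℝ) * R^2 := by
          rw [Finset.sum_const, Finset.card_univ, Fintype.card_fin, nsmul_eq_mul]
  have hQsq : ∑ m : Fin n, ∑ k : Fin n, Q m k ^ 2 ≤ (n:ℝ) * Sc^2 := by
    have hQm : ∀ m : Fin n, ∑ k, Q m k ^2 = ∑ j, C m j ^2 := by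
      intro m
      have := expand n V hVV (fun j => C m j)
      rw [← this]
      apply Finset.sum_congr rfl
      intro k _
      have hQe : Q m k = ∑ j, C m j * V j k := by
        rw [hQ, Matrix.mul_apply]
      rw [hQe]
    rw [Finset.sum_congr rfl (fun m (_ : m ∈ univ) => hQm m), Finset.sum_comm]
    calc ∑ j : Fin n, ∑ m : Fin n, C m j ^2 ≤ ∑ j : Fin n, Sc^2 :=
          Finset.sum_le_sum (fun j _ => hCcol j)
      _ = (n:ℝ) * Sc^2 := by
          rw [Finset.sum_const, Finset.card_univ, Fintype.card_fin, nsmul_eq_mul]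
  -- Cauchy-Schwarz
  have hCS : ∑ k : Fin n, σf n (k:ℕ) ≤ (n:ℝ) * (R * Sc) := by
    have h1 : ∑ k : Fin n, σf n (k:ℕ)
        = ∑ p ∈ (univ ×ˢ univ : Finset (Fin n × Fin n)), P p.1 p.2 * Q p.2 p.1 := by
      rw [Finset.sum_product]
      exact Finset.sum_congr rfl (fun k _ => hdiag k)
    rw [h1]
    have h2 := Real.sum_mul_le_sqrt_mul_sqrt (univ ×ˢ univ : Finset (Fin n × Fin n))
      (fun p => P p.1 p.2) (fun p => Q p.2 p.1)
    have h3 : ∑ p ∈ (univ ×ˢ univ : Finset (Fin n × Fin n)), P p.1 p.2 ^2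
        = ∑ k : Fin n, ∑ m : Fin n, P k m ^2 := by rw [Finset.sum_product]
    have h4 : ∑ p ∈ (univ ×ˢ univ : Finset (Fin n × Fin n)), Q p.2 p.1 ^2
        = ∑ m : Fin n, ∑ k : Fin n, Q m k ^2 := by
      rw [Finset.sum_product]
      exact Finset.sum_comm
    have h5 : ∑ k : Fin n, ∑ m : Fin n, P k m ^2 ≤ (n:ℝ) * R^2 := by
      rw [Finset.sum_comm]; exact hPsq
    calc ∑ p ∈ (univ ×ˢ univ : Finset (Fin n × Fin n)), P p.1 p.2 * Q p.2 p.1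
        ≤ Real.sqrt (∑ p ∈ (univ ×ˢ univ : Finset (Fin n × Fin n)), P p.1 p.2 ^2)
          * Real.sqrt (∑ p ∈ (univ ×ˢ univ : Finset (Fin n × Fin n)), Q p.2 p.1 ^2) := h2
      _ ≤ Real.sqrt ((n:ℝ) * R^2) * Real.sqrt ((n:ℝ) * Sc^2) := by
          apply mul_le_mul
          · apply Real.sqrt_le_sqrt; rw [h3]; exact h5
          · apply Real.sqrt_le_sqrt; rw [h4]; exact hQsq
          · exact Real.sqrt_nonneg _
          · exact Real.sqrt_nonneg _
      _ = (n:ℝ) * (R * Sc) := by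
          rw [← Real.sqrt_mul (by positivity)]
          have e : (n:ℝ) * R^2 * ((n:ℝ) * Sc^2) = ((n:ℝ) * (R * Sc))^2 := by ring
          rw [e, Real.sqrt_sq (by positivity)]
  have hfin := le_trans (sigma_sum_ge n) hCS
  exact le_of_mul_le_mul_left hfin hnR


lemma r_sq_wallis (k : ℕ) : r k ^ 2 * (2*(k:ℝ)+1) * Real.Wallis.W k = 1 := by
  induction k with
  | zero => simp [r, Real.Wallis.W]
  | succ k ih =>
    rw [Real.Wallis.W_succ]
    have hr : r (k+1) = r k * (2*(k:ℝ)+1) / (2*(k:ℝ)+2) := by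
      rw [r]
    rw [hr]
    have h1 : (0:ℝ) < 2*(k:ℝ)+1 := by positivity
    have h2 : (0:ℝ) < 2*(k:ℝ)+2 := by positivity
    have h3 : (0:ℝ) < 2*(k:ℝ)+3 := by positivity
    have e : (r k * (2*(k:ℝ)+1) / (2*(k:ℝ)+2)) ^ 2 * (2*(↑(k+1):ℝ)+1) *
        (Real.Wallis.W k * ((2*(k:ℝ)+2)/(2*(k:ℝ)+1) * ((2*(k:ℝ)+2)/(2*(k:ℝ)+3))))
        = r k ^ 2 * (2*(k:ℝ)+1) * Real.Wallis.W k := by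
      push_cast
      field_simp
      ring
    rw [e, ih]

lemma r_sq_le (k : ℕ) (hk : 1 ≤ k) : r k ^ 2 ≤ 1/(π * k) := by
  have hW := Real.Wallis.le_W k
  have hWpos := Real.Wallis.W_pos k
  have hI := r_sq_wallis k
  have hpi := Real.pi_pos
  have hk1 : (1:ℝ) ≤ (k:ℝ) := by exact_mod_cast hk
  have hden : π * (k:ℝ) ≤ (2*(k:ℝ)+1) * Real.Wallis.W k := by
    have h1 : (2*(k:ℝ)+1) * ((2*(k:ℝ)+1)/(2*(k:ℝ)+2) * (π/2)) ≤ (2*(k:ℝ)+1) * Real.Wallis.W k := by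
      apply mul_le_mul_of_nonneg_left hW (by positivity)
    have h2 : π * (k:ℝ) ≤ (2*(k:ℝ)+1) * ((2*(k:ℝ)+1)/(2*(k:ℝ)+2) * (π/2)) := by
      have hx : (2*(k:ℝ)+1) * ((2*(k:ℝ)+1)/(2*(k:ℝ)+2) * (π/2))
          = ((2*(k:ℝ)+1)^2*π)/(2*(2*(k:ℝ)+2)) := by
        field_simp
      rw [hx, le_div_iff₀ (by positivity)]
      nlinarith [hpi, hk1]
    linarith
  have hrk : r k ^ 2 = 1 / ((2*(k:ℝ)+1) * Real.Wallis.W k) := by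
    rw [eq_div_iff (by positivity)]
    linarith [hI]
  rw [hrk]
  apply one_div_le_one_div_of_le (by positivity) hden

lemma S_le (n : ℕ) (hn : 1 ≤ n) :
    S n ≤ 1 + (Real.log (2*(n:ℝ)+1) - Real.log 2 + Real.eulerMascheroniConstant)/π := by
  have hpi := Real.pi_pos
  obtain ⟨m, rfl⟩ : ∃ m, n = m + 1 := ⟨n - 1, by omega⟩
  have hS : S (m+1) = r 0 ^ 2 + ∑ k ∈ range m, r (k+1) ^ 2 := by
    rw [S, Finset.sum_range_succ']
    ring
  have hr0 : r 0 ^ 2 = 1 := by norm_num [r]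
  have hsum : ∑ k ∈ range m, r (k+1) ^ 2 ≤ (harmonic m : ℝ)/π := by
    have hharm : (harmonic m : ℝ) = ∑ k ∈ range m, 1/((k:ℝ)+1) := by
      rw [harmonic]
      push_cast
      apply Finset.sum_congr rfl
      intro k _
      rw [one_div]
    rw [hharm, Finset.sum_div]
    apply Finset.sum_le_sum
    intro k _
    have := r_sq_le (k+1) (by omega)
    have e : 1/(π * ((k:ℝ)+1)) = 1/((k:ℝ)+1)/π := by
      field_simp
    calc r (k+1) ^ 2 ≤ 1/(π * (↑(k+1):ℝ)) := this
      _ = 1/((k:ℝ)+1)/π := by push_cast; rw [e]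
  have hseq := Real.eulerMascheroniSeq_lt_eulerMascheroniConstant m
  rw [Real.eulerMascheroniSeq] at hseq
  -- harmonic m ≤ log (m+1) + γ
  have hharm2 : (harmonic m : ℝ) ≤ Real.log ((m:ℝ)+1) + Real.eulerMascheroniConstant := by
    linarith [hseq]
  have hlog : Real.log ((m:ℝ)+1) ≤ Real.log (2*(↑(m+1):ℝ)+1) - Real.log 2 := by
    have h1 : Real.log 2 + Real.log ((m:ℝ)+1) = Real.log (2*((m:ℝ)+1)) := by
      rw [← Real.log_mul (by norm_num) (by positivity)]
    have h2 : Real.log (2*((m:ℝ)+1)) ≤ Real.log (2*(↑(m+1):ℝ)+1) := by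
      apply Real.log_le_log (by positivity)
      push_cast
      linarith
    linarith
  rw [hS, hr0]
  have : ∑ k ∈ range m, r (k+1) ^ 2 ≤ (Real.log (2*(↑(m+1):ℝ)+1) - Real.log 2
      + Real.eulerMascheroniConstant)/π := by
    apply le_trans hsum
    apply div_le_div_of_nonneg_right _ hpi.le
    linarith
  linarith

lemma const_le (hc : Real.eulerMascheroniConstant < Real.eulerMascheroniSeq' 32) :
    (Real.eulerMascheroniConstant - Real.log 2) / π ≤ -0.03 := by
  have hpi := Real.pi_pos
  have hpilt : π < 3.141593 := Real.pi_lt_d6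
  have hlog2 : 0.6931471803 < Real.log 2 := Real.log_two_gt_d9
  have hseq : Real.eulerMascheroniSeq' 32 = (harmonic 32 : ℝ) - Real.log 32 := by
    rw [Real.eulerMascheroniSeq']
    norm_num
  have hlog32 : Real.log 32 = 5 * Real.log 2 := by
    have : (32:ℝ) = 2^5 := by norm_num
    rw [this, Real.log_pow]
    norm_num
  have hharm32 : (harmonic 32 : ℝ) ≤ 4.0584952 := by
    have h : (harmonic 32 : ℚ) ≤ 4.0584952 := by
      norm_num [harmonic_succ, harmonic_zero]
    have h2 : ((harmonic 32 : ℚ) : ℝ) ≤ ((4.0584952 : ℚ) : ℝ) := by exact_mod_cast h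
    have h3 : ((4.0584952 : ℚ) : ℝ) = 4.0584952 := by norm_num
    rw [h3] at h2
    exact h2
  rw [div_le_iff₀ hpi]
  nlinarith [hc, hseq, hlog32, hharm32]

end ToeGap

/-- The gap between the optimal lower triangular Toeplitz factorization and the optimal
general factorization is at most `1 + (γ - log 2)/π ≤ 0.97`. -/
theorem toeplitz_gap (n : ℕ) (hn : 1 ≤ n) :
    OptLTToe n - OptGen n ≤
      1 + (Real.eulerMascheroniConstant - Real.log 2) / Real.pi ∧
    OptLTToe n - OptGen n ≤ 0.97 := by
  have h1 := ToeGap.optLTToe_le n hn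
  have h2 := ToeGap.optGen_ge n hn
  have h3 := ToeGap.S_le n hn
  have hmain : OptLTToe n - OptGen n ≤
      1 + (Real.eulerMascheroniConstant - Real.log 2) / Real.pi := by
    have hpi := Real.pi_pos
    have e : 1 + (Real.log (2*(n:ℝ)+1) - Real.log 2 + Real.eulerMascheroniConstant)/π
        = Real.log (2*(n:ℝ)+1)/π + (1 + (Real.eulerMascheroniConstant - Real.log 2)/π) := by
      field_simp
      ring
    rw [e] at h3
    linarith
  refine ⟨hmain, ?_⟩
  have hc := Real.eulerMascheroniConstant_lt_eulerMascheroniSeq' 32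
  have := ToeGap.const_le hc
  norm_num at this ⊢
  linarith
end

section
/- Let d ≥ 1, u, v ∈ ℝ^d and W ∈ ℝ^{d×d} with ⟨u, v⟩ = 1. Define formal power series over ℝ by r = Σ_{k=0}^{∞} (uᵀ W^k v) X^k and s = 1 - Σ_{ℓ=1}^{∞} (uᵀ W (W - v uᵀ W)^{ℓ-1} v) X^ℓ. Then r · s = 1 in the ring of formal power series ℝ[[X]]; that is, s is the multiplicative inverse of r, so the reciprocal generating function 1/r(x) has coefficient sequence s_0 = 1 and s_ℓ = -uᵀ W (W - v uᵀ W)^{ℓ-1} v for ℓ ≥ 1. -/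
/-!
Put `M = W - v uᵀ W`. The noncommutative telescoping identity gives
`W^(n+1) - M^(n+1) = ∑_{i+j=n} W^i (v uᵀ W) M^j`, and `uᵀ v = 1` gives `uᵀ M = 0`. Sandwiching
between `uᵀ` and `v` therefore yields the convolution `r_{n+1} = ∑_{i+j=n} r_i b_j` with
`b_j = uᵀ W M^j v`, i.e. `r = 1 + X r B` for `B = ∑ b_j X^j`; this is `r (1 - X B) = 1`, and
`1 - X B` is `s`.
-/

open Finset Matrix

theorem pow_succ_sub_pow_succ_eq_sum_antidiagonal {R : Type*} [Ring R] (a b : R) (n : ℕ) :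
    a ^ (n + 1) - b ^ (n + 1) = ∑ p ∈ antidiagonal n, a ^ p.1 * (a - b) * b ^ p.2 := by
  induction n with
  | zero => simp
  | succ n ih =>
    calc a ^ (n + 2) - b ^ (n + 2) = (a - b) * b ^ (n + 1) + a * (a ^ (n + 1) - b ^ (n + 1)) := by
          rw [pow_succ' a, pow_succ' b]; noncomm_ring
      _ = _ := by
          rw [ih, mul_sum, Nat.sum_antidiagonal_succ]
          simp [pow_succ', mul_assoc]

section RankOne

variable {R ι : Type*} [CommRing R] [Fintype ι]

theorem dotProduct_mul_vecMulVec_mul_mulVec (x y p q : ι → R) (A B : Matrix ι ι R) :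
    x ⬝ᵥ ((A * vecMulVec p q * B) *ᵥ y) = (x ⬝ᵥ (A *ᵥ p)) * (q ⬝ᵥ (B *ᵥ y)) := by
  rw [mul_vecMulVec, vecMulVec_mul, vecMulVec_mulVec, dotProduct_mulVec (A := B)]
  simp [mul_comm]

theorem vecMul_sub_vecMulVec_mul_eq_zero {u v : ι → R} (huv : u ⬝ᵥ v = 1) (W : Matrix ι ι R) :
    u ᵥ* (W - vecMulVec v u * W) = 0 := by
  rw [vecMul_sub, ← vecMul_vecMul, vecMul_vecMulVec, huv, one_smul, sub_self]

theorem dotProduct_pow_succ_mulVec_eq_zero [DecidableEq ι] {u : ι → R} {M : Matrix ι ι R}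
    (hM : u ᵥ* M = 0) (y : ι → R) (n : ℕ) : u ⬝ᵥ ((M ^ (n + 1)) *ᵥ y) = 0 := by
  rw [dotProduct_mulVec, pow_succ', ← vecMul_vecMul, hM, zero_vecMul, zero_dotProduct]

theorem dotProduct_pow_succ_mulVec_eq_sum_antidiagonal [DecidableEq ι] {u v : ι → R}
    (huv : u ⬝ᵥ v = 1) (W : Matrix ι ι R) (n : ℕ) :
    u ⬝ᵥ (W ^ (n + 1) *ᵥ v) = ∑ p ∈ antidiagonal n,
      (u ⬝ᵥ (W ^ p.1 *ᵥ v)) * (u ⬝ᵥ ((W * (W - vecMulVec v u * W) ^ p.2) *ᵥ v)) := by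
  set M := W - vecMulVec v u * W
  have hWM : W - M = vecMulVec v u * W := sub_sub_cancel _ _
  calc u ⬝ᵥ (W ^ (n + 1) *ᵥ v) = u ⬝ᵥ ((W ^ (n + 1) - M ^ (n + 1)) *ᵥ v) := by
        rw [sub_mulVec, dotProduct_sub,
          dotProduct_pow_succ_mulVec_eq_zero (vecMul_sub_vecMulVec_mul_eq_zero huv W), sub_zero]
    _ = _ := by
        rw [pow_succ_sub_pow_succ_eq_sum_antidiagonal, sum_mulVec, dotProduct_sum]
        refine sum_congr rfl fun p _ => ?_
        rw [hWM, ← Matrix.mul_assoc, Matrix.mul_assoc _ _ (M ^ p.2),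
          dotProduct_mul_vecMulVec_mul_mulVec]

end RankOne

namespace PowerSeries

variable {R : Type*} [CommRing R]

theorem one_sub_X_mul_mk (c : ℕ → R) :
    1 - X * mk c = mk fun k => if k = 0 then 1 else -c (k - 1) := by
  ext (_ | n) <;> simp [coeff_one, sub_eq_add_neg]

theorem mk_mul_one_sub_X_mul_mk_eq_one {a b : ℕ → R} (h0 : a 0 = 1)
    (hsucc : ∀ n, a (n + 1) = ∑ p ∈ antidiagonal n, a p.1 * b p.2) :
    mk a * (1 - X * mk b) = 1 := by
  have hrec : mk a = 1 + X * (mk a * mk b) := by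
    ext (_ | n)
    · simp [h0]
    · rw [coeff_mk, hsucc, map_add, coeff_succ_X_mul, coeff_mul, coeff_one, if_neg n.succ_ne_zero,
        zero_add]
      simp only [coeff_mk]
  linear_combination hrec

end PowerSeries

theorem reciprocal_power_series_general (d : ℕ)
    (u v : Fin d → ℝ) (W : Matrix (Fin d) (Fin d) ℝ)
    (huv : dotProduct u v = 1) :
    (PowerSeries.mk (fun k : ℕ => dotProduct u ((W ^ k).mulVec v)) :
        PowerSeries ℝ) *
      PowerSeries.mk (fun k : ℕ =>
        if k = 0 then (1 : ℝ)
        else -dotProduct u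
          ((W * (W - Matrix.vecMulVec v u * W) ^ (k - 1)).mulVec v)) = 1 := by
  rw [← PowerSeries.one_sub_X_mul_mk fun ℓ => u ⬝ᵥ ((W * (W - vecMulVec v u * W) ^ ℓ) *ᵥ v)]
  exact PowerSeries.mk_mul_one_sub_X_mul_mk_eq_one (by simp [huv])
    (dotProduct_pow_succ_mulVec_eq_sum_antidiagonal huv W)

/-- Representation of the reciprocal of a rational generating function: if
`r = ∑ₖ (uᵀ Wᵏ v) Xᵏ` with `⟨u, v⟩ = 1`, then the formal power series `s` with
`s 0 = 1` and `s ℓ = -uᵀ W (W - v uᵀ W)^{ℓ-1} v` for `ℓ ≥ 1` satisfies `r * s = 1`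
in `ℝ[[X]]`. -/
theorem reciprocal_power_series (d : ℕ) (hd : 1 ≤ d)
    (u v : Fin d → ℝ) (W : Matrix (Fin d) (Fin d) ℝ)
    (huv : dotProduct u v = 1) :
    (PowerSeries.mk (fun k : ℕ => dotProduct u ((W ^ k).mulVec v)) :
        PowerSeries ℝ) *
      PowerSeries.mk (fun k : ℕ =>
        if k = 0 then (1 : ℝ)
        else -dotProduct u
          ((W * (W - Matrix.vecMulVec v u * W) ^ (k - 1)).mulVec v)) = 1 :=
  reciprocal_power_series_general d u v W huv
end

section
/- Let B_1, C_1ᵀ ∈ ℝ^{n_1 × n_1'} and B_2, C_2ᵀ ∈ ℝ^{n_2 × n_2'} satisfy B_1 C_1 = A^{(n_1)} and B_2 C_2 = A^{(n_2)}. Define comb(B_1, B_2) = [ I^{(n_1)} ⊗ B_2 | (S^{(n_1)} B_1) ⊗ 1^{(n_2)} ] ∈ ℝ^{(n_1 n_2) × (n_1 n_2' + n_1')} (horizontal concatenation) and comc(C_1, C_2) as the vertical stacking of I^{(n_1)} ⊗ C_2 on top of C_1 ⊗ (1^{(n_2)})ᵀ, a matrix in ℝ^{(n_1 n_2' + n_1')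 × (n_1 n_2)}. Then: (a) comb(B_1, B_2) · comc(C_1, C_2) = A^{(n_1 n_2)}; (b) ‖comb(B_1, B_2)‖_{2→∞}² = ‖S^{(n_1)} B_1‖_{2→∞}² + ‖B_2‖_{2→∞}² ≤ ‖B_1‖_{2→∞}² + ‖B_2‖_{2→∞}²; and (c) ‖comc(C_1, C_2)‖_{1→2}² = ‖C_1‖_{1→2}² + ‖C_2‖_{1→2}². -/
/-- Squared maximum Euclidean row norm `‖M‖²_{2→∞}`. -/
noncomputable def sqMaxRowNorm {m n : Type*} [Fintype m] [Fintype n]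
    (M : Matrix m n ℝ) : ℝ :=
  ⨆ i : m, ∑ j, (M i j) ^ 2

/-- Squared maximum Euclidean column norm `‖M‖²_{1→2}`. -/
noncomputable def sqMaxColNorm {m n : Type*} [Fintype m] [Fintype n]
    (M : Matrix m n ℝ) : ℝ :=
  ⨆ j : n, ∑ i, (M i j) ^ 2

/-- The lower triangular all-ones matrix of size `n₁ n₂`, indexed by `Fin n₁ × Fin n₂`
in lexicographic order. -/
def allOnesLTProd (n₁ n₂ : ℕ) : Matrix (Fin n₁ × Fin n₂) (Fin n₁ × Fin n₂) ℝ :=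
  Matrix.of fun p q =>
    if q.1 < p.1 ∨ (q.1 = p.1 ∧ q.2 ≤ p.2) then 1 else 0

/-- The `n × n` non-cyclic shift matrix `S`, with `S i j = 1` iff `i = j + 1`. -/
def shiftMatrix (n : ℕ) : Matrix (Fin n) (Fin n) ℝ :=
  Matrix.of fun i j => if (i : ℕ) = (j : ℕ) + 1 then 1 else 0

/-- `comb(B₁, B₂) = [ I ⊗ B₂ | (S B₁) ⊗ 𝟙 ]`, the horizontal concatenation used in the
recursive factorization. -/
def combB {n₁ n₁' n₂ n₂' : ℕ}
    (B₁ : Matrix (Fin n₁) (Fin n₁') ℝ) (B₂ : Matrix (Fin n₂) (Fin n₂') ℝ) :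
    Matrix (Fin n₁ × Fin n₂) ((Fin n₁ × Fin n₂') ⊕ Fin n₁') ℝ :=
  Matrix.of fun i j =>
    Sum.elim
      (fun j' : Fin n₁ × Fin n₂' => (if i.1 = j'.1 then (1 : ℝ) else 0) * B₂ i.2 j'.2)
      (fun j' : Fin n₁' => (shiftMatrix n₁ * B₁) i.1 j') j

/-- `comc(C₁, C₂)`, the vertical stacking of `I ⊗ C₂` on top of `C₁ ⊗ 𝟙ᵀ`. -/
def combC {n₁ n₁' n₂ n₂' : ℕ}
    (C₁ : Matrix (Fin n₁') (Fin n₁) ℝ) (C₂ : Matrix (Fin n₂') (Fin n₂) ℝ) :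
    Matrix ((Fin n₁ × Fin n₂') ⊕ Fin n₁') (Fin n₁ × Fin n₂) ℝ :=
  Matrix.of fun i j =>
    Sum.elim
      (fun i' : Fin n₁ × Fin n₂' => (if i'.1 = j.1 then (1 : ℝ) else 0) * C₂ i'.2 j.2)
      (fun i' : Fin n₁' => C₁ i' j.1) i

/-!
Blockwise, `comb(B₁, B₂) · comc(C₁, C₂) = I ⊗ (B₂ C₂) + (S B₁ C₁) ⊗ 𝟙𝟙ᵀ
= I ⊗ A⁽ⁿ²⁾ + (S A⁽ⁿ¹⁾) ⊗ 𝟙𝟙ᵀ`. As `S A⁽ⁿ¹⁾` is the strictly lower triangular all-ones matrix,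
this has copies of `A⁽ⁿ²⁾` on the diagonal blocks and all-ones blocks strictly below them,
which is `A⁽ⁿ¹ⁿ²⁾` in lexicographic order.

The row of `comb(B₁, B₂)` indexed by `(i₁, i₂)` is row `i₂` of `B₂` (padded with zeros) next
to row `i₁` of `S B₁`, so squared row norms add, and the maximum of `f i₁ + g i₂` over a product
is the sum of the maxima; columns of `comc(C₁, C₂)` behave the same way. Multiplying by `S`
only moves the rows of `B₁` down, so it cannot increase the maximal row norm.
-/

open Matrix Finset

theorem ciSup_prod_add {α ι κ : Type*} [ConditionallyCompleteLinearOrder α] [Add α]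
    [AddLeftMono α] [AddRightMono α] [Finite ι] [Finite κ] [Nonempty ι] [Nonempty κ]
    (f : ι → α) (g : κ → α) :
    ⨆ p : ι × κ, (f p.1 + g p.2) = (⨆ i, f i) + ⨆ j, g j := by
  obtain ⟨i, hi⟩ := Finite.exists_max f
  obtain ⟨j, hj⟩ := Finite.exists_max g
  have hf : ⨆ i, f i = f i := le_antisymm (ciSup_le hi) (le_ciSup (Finite.bddAbove_range f) i)
  have hg : ⨆ j, g j = g j := le_antisymm (ciSup_le hj) (le_ciSup (Finite.bddAbove_range g) j)
  rw [hf, hg]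
  exact le_antisymm (ciSup_le fun p => add_le_add (hi p.1) (hj p.2))
    (le_ciSup (Finite.bddAbove_range fun p : ι × κ => f p.1 + g p.2) (i, j))

section Norms

variable {m n : Type*} [Fintype m] [Fintype n]

theorem sqMaxRowNorm_nonneg (M : Matrix m n ℝ) : 0 ≤ sqMaxRowNorm M :=
  Real.iSup_nonneg fun _ => sum_nonneg fun _ _ => sq_nonneg _

theorem sum_sq_row_le_sqMaxRowNorm (M : Matrix m n ℝ) (i : m) :
    ∑ j, M i j ^ 2 ≤ sqMaxRowNorm M :=
  le_ciSup (Finite.bddAbove_range fun i => ∑ j, M i j ^ 2) i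

end Norms

section Shift

variable {n : ℕ} {α : Type*}

theorem shiftMatrix_mul_apply (B : Matrix (Fin n) α ℝ) (i : Fin n) (j : α) :
    (shiftMatrix n * B) i j = if h : 0 < (i : ℕ) then B ⟨i - 1, by omega⟩ j else 0 := by
  simp only [mul_apply, shiftMatrix, of_apply, ite_mul, one_mul, zero_mul]
  split_ifs with h
  · rw [sum_eq_single ⟨i - 1, by omega⟩]
    · simp only [if_pos (show (i : ℕ) = i - 1 + 1 by omega)]
    · intro k _ hk
      exact if_neg fun hik => hk (Fin.ext (show (k : ℕ) = i - 1 by omega))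
    · simp
  · exact sum_eq_zero fun k _ => if_neg (by omega)

theorem shiftMatrix_mul_allOnesLT_apply (i j : Fin n) :
    (shiftMatrix n * allOnesLT n) i j = if j < i then 1 else 0 := by
  by_cases hi : 0 < (i : ℕ)
  · simp only [shiftMatrix_mul_apply, dif_pos hi, allOnesLT, of_apply, Fin.lt_def,
      Nat.le_sub_one_iff_lt hi]
  · rw [shiftMatrix_mul_apply, dif_neg hi, if_neg (by rw [Fin.lt_def]; omega)]

theorem sqMaxRowNorm_shiftMatrix_mul_le [Fintype α] (B : Matrix (Fin n) α ℝ) :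
    sqMaxRowNorm (shiftMatrix n * B) ≤ sqMaxRowNorm B := by
  refine Real.iSup_le (fun i => ?_) (sqMaxRowNorm_nonneg B)
  simp only [shiftMatrix_mul_apply]
  split_ifs
  · exact sum_sq_row_le_sqMaxRowNorm B _
  · simpa using sqMaxRowNorm_nonneg B

end Shift

section Comb

variable {n₁ n₁' n₂ n₂' : ℕ}
  (B₁ : Matrix (Fin n₁) (Fin n₁') ℝ) (C₁ : Matrix (Fin n₁') (Fin n₁) ℝ)
  (B₂ : Matrix (Fin n₂) (Fin n₂') ℝ) (C₂ : Matrix (Fin n₂') (Fin n₂) ℝ)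

theorem combB_mul_combC_apply (p q : Fin n₁ × Fin n₂) :
    (combB B₁ B₂ * combC C₁ C₂) p q =
      (if p.1 = q.1 then (B₂ * C₂) p.2 q.2 else 0) + (shiftMatrix n₁ * B₁ * C₁) p.1 q.1 := by
  simp only [mul_apply, combB, combC, of_apply, Sum.elim_inl, Sum.elim_inr,
    Fintype.sum_sum_type, Fintype.sum_prod_type, ite_mul, mul_ite, one_mul, zero_mul,
    mul_zero, sum_ite_eq', mem_univ, if_true, sum_ite_irrel, sum_const_zero]

theorem combB_mul_combC (h₁ : B₁ * C₁ = allOnesLT n₁) (h₂ : B₂ * C₂ = allOnesLT n₂) :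
    combB B₁ B₂ * combC C₁ C₂ = allOnesLTProd n₁ n₂ := by
  ext p q
  rw [combB_mul_combC_apply, Matrix.mul_assoc, h₁, h₂, shiftMatrix_mul_allOnesLT_apply]
  simp only [allOnesLT, allOnesLTProd, of_apply, Fin.lt_def, Fin.le_def, Fin.ext_iff]
  split_ifs <;> norm_num <;> omega

theorem sum_sq_combB_row (p : Fin n₁ × Fin n₂) :
    ∑ j, combB B₁ B₂ p j ^ 2 = ∑ j, (shiftMatrix n₁ * B₁) p.1 j ^ 2 + ∑ j, B₂ p.2 j ^ 2 := by
  simp [combB, Fintype.sum_sum_type, Fintype.sum_prod_type, add_comm]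

theorem sum_sq_combC_col (q : Fin n₁ × Fin n₂) :
    ∑ i, combC C₁ C₂ i q ^ 2 = ∑ i, C₁ i q.1 ^ 2 + ∑ i, C₂ i q.2 ^ 2 := by
  simp [combC, Fintype.sum_sum_type, Fintype.sum_prod_type, add_comm]

-- `⨆` over an empty index type is `0`, so the maxima only add when both factors are nonempty.
variable [NeZero n₁] [NeZero n₂]

theorem sqMaxRowNorm_combB :
    sqMaxRowNorm (combB B₁ B₂) = sqMaxRowNorm (shiftMatrix n₁ * B₁) + sqMaxRowNorm B₂ := by
  simp only [sqMaxRowNorm, sum_sq_combB_row]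
  exact ciSup_prod_add (fun i => ∑ j, (shiftMatrix n₁ * B₁) i j ^ 2) fun i => ∑ j, B₂ i j ^ 2

theorem sqMaxColNorm_combC :
    sqMaxColNorm (combC C₁ C₂) = sqMaxColNorm C₁ + sqMaxColNorm C₂ := by
  simp only [sqMaxColNorm, sum_sq_combC_col]
  exact ciSup_prod_add (fun j => ∑ i, C₁ i j ^ 2) fun j => ∑ i, C₂ i j ^ 2

end Comb

theorem comb_comc_factorization_general (n₁ n₁' n₂ n₂' : ℕ)
    (hn₁ : 1 ≤ n₁) (hn₂ : 1 ≤ n₂)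
    (B₁ : Matrix (Fin n₁) (Fin n₁') ℝ) (C₁ : Matrix (Fin n₁') (Fin n₁) ℝ)
    (B₂ : Matrix (Fin n₂) (Fin n₂') ℝ) (C₂ : Matrix (Fin n₂') (Fin n₂) ℝ)
    (h₁ : B₁ * C₁ = allOnesLT n₁) (h₂ : B₂ * C₂ = allOnesLT n₂) :
    combB B₁ B₂ * combC C₁ C₂ = allOnesLTProd n₁ n₂ ∧
    sqMaxRowNorm (combB B₁ B₂) =
      sqMaxRowNorm (shiftMatrix n₁ * B₁) + sqMaxRowNorm B₂ ∧
    sqMaxRowNorm (combB B₁ B₂) ≤ sqMaxRowNorm B₁ + sqMaxRowNorm B₂ ∧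
    sqMaxColNorm (combC C₁ C₂) = sqMaxColNorm C₁ + sqMaxColNorm C₂ := by
  have : NeZero n₁ := ⟨by omega⟩
  have : NeZero n₂ := ⟨by omega⟩
  refine ⟨combB_mul_combC B₁ C₁ B₂ C₂ h₁ h₂, sqMaxRowNorm_combB B₁ B₂, ?_,
    sqMaxColNorm_combC C₁ C₂⟩
  rw [sqMaxRowNorm_combB]
  exact add_le_add_left (sqMaxRowNorm_shiftMatrix_mul_le B₁) _

/-- Combining two factorizations of all-ones lower triangular matrices yields a
factorization of the larger all-ones lower triangular matrix, with squared max row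
norms adding for the `B`-part and squared max column norms adding for the `C`-part. -/
theorem comb_comc_factorization (n₁ n₁' n₂ n₂' : ℕ)
    (hn₁ : 1 ≤ n₁) (hn₁' : 1 ≤ n₁') (hn₂ : 1 ≤ n₂) (hn₂' : 1 ≤ n₂')
    (B₁ : Matrix (Fin n₁) (Fin n₁') ℝ) (C₁ : Matrix (Fin n₁') (Fin n₁) ℝ)
    (B₂ : Matrix (Fin n₂) (Fin n₂') ℝ) (C₂ : Matrix (Fin n₂') (Fin n₂) ℝ)
    (h₁ : B₁ * C₁ = allOnesLT n₁) (h₂ : B₂ * C₂ = allOnesLT n₂) :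
    combB B₁ B₂ * combC C₁ C₂ = allOnesLTProd n₁ n₂ ∧
    sqMaxRowNorm (combB B₁ B₂) =
      sqMaxRowNorm (shiftMatrix n₁ * B₁) + sqMaxRowNorm B₂ ∧
    sqMaxRowNorm (combB B₁ B₂) ≤ sqMaxRowNorm B₁ + sqMaxRowNorm B₂ ∧
    sqMaxColNorm (combC C₁ C₂) = sqMaxColNorm C₁ + sqMaxColNorm C₂ :=
  comb_comc_factorization_general n₁ n₁' n₂ n₂' hn₁ hn₂ B₁ C₁ B₂ C₂ h₁ h₂
end

section
/- Let n ≥ 1, let M be an n×n real symmetric positive definite matrix, and let e ∈ ℝ^n. Then for every symmetric positive semidefinite matrix Γ ∈ ℝ^{n×n}, (eᵀ M^{-1} e) · trace(Γ M) ≥ eᵀ Γ e, and equality holds for Γ = M^{-1} e eᵀ M^{-1}. Consequently, if e ≠ 0 then eᵀ M^{-1} e = 1 / min{ trace(Γ M) : Γ symmetric positive semidefinite with eᵀ Γ e = 1 }. -/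
/-!
Both sides of the inequality are linear in `Γ`, and a positive semidefinite `Γ` is a sum of
rank-one matrices `v vᵀ`. For `Γ = v vᵀ` the inequality reads `(v ⬝ e)² ≤ (eᵀ M⁻¹ e)(vᵀ M v)`,
which is Cauchy–Schwarz for the inner product `⟨x, y⟩ = xᵀ M y` applied to `v` and `M⁻¹ e`.
Equality in Cauchy–Schwarz at `v ∥ M⁻¹ e` gives the extremal `Γ`, and rescaling it to
`eᵀ Γ e = 1` shows that `(eᵀ M⁻¹ e)⁻¹` is the least value of `trace (Γ M)`.
-/

open Matrix

namespace Matrix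

variable {ι : Type*} [Fintype ι]

theorem PosSemidef.sq_dotProduct_mulVec_le {M : Matrix ι ι ℝ} (hM : M.PosSemidef) (x y : ι → ℝ) :
    (x ⬝ᵥ M *ᵥ y) ^ 2 ≤ (x ⬝ᵥ M *ᵥ x) * (y ⬝ᵥ M *ᵥ y) := by
  let := M.toSeminormedAddCommGroup hM
  let := M.toInnerProductSpace hM
  have inner_eq (u v : ι → ℝ) : inner ℝ u v = u ⬝ᵥ M *ᵥ v := by
    change M *ᵥ v ⬝ᵥ star u = _
    rw [star_trivial, dotProduct_comm]
  simpa only [inner_eq, ← sq] using real_inner_mul_inner_self_le x y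

theorem dotProduct_vecMulVec_mulVec {R : Type*} [CommSemiring R] (e u v : ι → R) :
    e ⬝ᵥ vecMulVec u v *ᵥ e = (e ⬝ᵥ u) * (v ⬝ᵥ e) := by
  rw [vecMulVec_mulVec]
  simp [dotProduct_smul, mul_comm]

theorem trace_vecMulVec_mul {R : Type*} [CommSemiring R] (u v : ι → R) (M : Matrix ι ι R) :
    (vecMulVec u v * M).trace = v ⬝ᵥ M *ᵥ u := by
  rw [vecMulVec_mul, trace_vecMulVec, dotProduct_comm, dotProduct_mulVec]

variable [DecidableEq ι] {M : Matrix ι ι ℝ}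

theorem PosDef.sq_dotProduct_le (hM : M.PosDef) (a e : ι → ℝ) :
    (a ⬝ᵥ e) ^ 2 ≤ (e ⬝ᵥ M⁻¹ *ᵥ e) * (a ⬝ᵥ M *ᵥ a) := by
  have hMw : M *ᵥ M⁻¹ *ᵥ e = e := by
    rw [mulVec_mulVec, mul_nonsing_inv _ hM.det_pos.ne'.isUnit, one_mulVec]
  have h := hM.posSemidef.sq_dotProduct_mulVec_le a (M⁻¹ *ᵥ e)
  rwa [hMw, dotProduct_comm (M⁻¹ *ᵥ e), mul_comm] at h

theorem PosDef.dotProduct_mulVec_le_mul_trace (hM : M.PosDef) {Γ : Matrix ι ι ℝ}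
    (hΓ : Γ.PosSemidef) (e : ι → ℝ) :
    e ⬝ᵥ Γ *ᵥ e ≤ (e ⬝ᵥ M⁻¹ *ᵥ e) * (Γ * M).trace := by
  obtain ⟨m, v, rfl⟩ := posSemidef_iff_eq_sum_vecMulVec.mp hΓ
  simp only [star_trivial, sum_mulVec, dotProduct_sum, Finset.sum_mul, trace_sum, Finset.mul_sum]
  refine Finset.sum_le_sum fun i _ => ?_
  rw [dotProduct_vecMulVec_mulVec, trace_vecMulVec_mul, dotProduct_comm e, ← sq]
  exact hM.sq_dotProduct_le (v i) e

section

variable {R : Type*} [CommRing R] {A : Matrix ι ι R}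

theorem trace_vecMulVec_inv_mul (hA : IsUnit A.det) (e : ι → R) :
    (vecMulVec (A⁻¹ *ᵥ e) (e ᵥ* A⁻¹) * A).trace = e ⬝ᵥ A⁻¹ *ᵥ e := by
  rw [trace_vecMulVec_mul, mulVec_mulVec, mul_nonsing_inv _ hA, one_mulVec, ← dotProduct_mulVec]

theorem dotProduct_vecMulVec_inv_mulVec (e : ι → R) :
    e ⬝ᵥ vecMulVec (A⁻¹ *ᵥ e) (e ᵥ* A⁻¹) *ᵥ e = (e ⬝ᵥ A⁻¹ *ᵥ e) ^ 2 := by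
  rw [dotProduct_vecMulVec_mulVec, ← dotProduct_mulVec, sq]

end

theorem PosDef.isLeast_trace_mul (hM : M.PosDef) {e : ι → ℝ} (he : e ≠ 0) :
    IsLeast {t | ∃ Γ : Matrix ι ι ℝ, Γ.PosSemidef ∧ e ⬝ᵥ Γ *ᵥ e = 1 ∧ t = (Γ * M).trace}
      (e ⬝ᵥ M⁻¹ *ᵥ e)⁻¹ := by
  set α := e ⬝ᵥ M⁻¹ *ᵥ e
  have hα : 0 < α := by simpa only [star_trivial] using hM.inv.dotProduct_mulVec_pos he
  refine ⟨⟨(α ^ 2)⁻¹ • vecMulVec (M⁻¹ *ᵥ e) (e ᵥ* M⁻¹), ?_, ?_, ?_⟩, ?_⟩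
  · have hsymm : e ᵥ* M⁻¹ = M⁻¹ *ᵥ e := by
      rw [← mulVec_transpose, isHermitian_iff_isSymm.mp hM.inv.isHermitian]
    rw [hsymm]
    refine PosSemidef.smul ?_ (by positivity)
    simpa only [star_trivial] using posSemidef_vecMulVec_self_star (M⁻¹ *ᵥ e)
  · rw [smul_mulVec, dotProduct_smul, dotProduct_vecMulVec_inv_mulVec, smul_eq_mul,
      inv_mul_cancel₀ (by positivity)]
  · rw [smul_mul_assoc, trace_smul, trace_vecMulVec_inv_mul hM.det_pos.ne'.isUnit, smul_eq_mul,
      sq, mul_inv]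
    exact (inv_mul_cancel_right₀ hα.ne' _).symm
  · rintro t ⟨Γ, hΓ, hΓe, rfl⟩
    rw [inv_le_iff_one_le_mul₀' hα, ← hΓe]
    exact hM.dotProduct_mulVec_le_mul_trace hΓ e

end Matrix

theorem matrix_fractional_lower_bound_general (n : ℕ)
    (M : Matrix (Fin n) (Fin n) ℝ) (hM : M.PosDef) (e : Fin n → ℝ) :
    (∀ Γ : Matrix (Fin n) (Fin n) ℝ, Γ.PosSemidef →
      dotProduct e (M⁻¹.mulVec e) * (Γ * M).trace ≥
        dotProduct e (Γ.mulVec e)) ∧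
    (dotProduct e (M⁻¹.mulVec e) *
        ((Matrix.vecMulVec (M⁻¹.mulVec e) (Matrix.vecMul e M⁻¹)) * M).trace =
      dotProduct e
        ((Matrix.vecMulVec (M⁻¹.mulVec e) (Matrix.vecMul e M⁻¹)).mulVec e)) ∧
    (e ≠ 0 →
      dotProduct e (M⁻¹.mulVec e) =
        1 / sInf { t : ℝ | ∃ Γ : Matrix (Fin n) (Fin n) ℝ,
          Γ.PosSemidef ∧ dotProduct e (Γ.mulVec e) = 1 ∧ t = (Γ * M).trace }) := by
  refine ⟨fun Γ hΓ => hM.dotProduct_mulVec_le_mul_trace hΓ e, ?_, fun he => ?_⟩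
  · rw [trace_vecMulVec_inv_mul hM.det_pos.ne'.isUnit, dotProduct_vecMulVec_inv_mulVec, sq]
  · rw [(hM.isLeast_trace_mul he).csInf_eq, one_div, inv_inv]

/-- Lower bound on the matrix fractional function: for a symmetric positive definite
`M` and any vector `e`, every symmetric positive semidefinite `Γ` satisfies
`(eᵀ M⁻¹ e) · trace(Γ M) ≥ eᵀ Γ e`, with equality for `Γ = M⁻¹ e eᵀ M⁻¹`.
Consequently, if `e ≠ 0` then
`eᵀ M⁻¹ e = 1 / inf { trace(Γ M) : Γ PSD, eᵀ Γ e = 1 }`. -/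
theorem matrix_fractional_lower_bound (n : ℕ) (hn : 1 ≤ n)
    (M : Matrix (Fin n) (Fin n) ℝ) (hM : M.PosDef) (e : Fin n → ℝ) :
    (∀ Γ : Matrix (Fin n) (Fin n) ℝ, Γ.PosSemidef →
      dotProduct e (M⁻¹.mulVec e) * (Γ * M).trace ≥
        dotProduct e (Γ.mulVec e)) ∧
    (dotProduct e (M⁻¹.mulVec e) *
        ((Matrix.vecMulVec (M⁻¹.mulVec e) (Matrix.vecMul e M⁻¹)) * M).trace =
      dotProduct e
        ((Matrix.vecMulVec (M⁻¹.mulVec e) (Matrix.vecMul e M⁻¹)).mulVec e)) ∧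
    (e ≠ 0 →
      dotProduct e (M⁻¹.mulVec e) =
        1 / sInf { t : ℝ | ∃ Γ : Matrix (Fin n) (Fin n) ℝ,
          Γ.PosSemidef ∧ dotProduct e (Γ.mulVec e) = 1 ∧ t = (Γ * M).trace }) :=
  matrix_fractional_lower_bound_general n M hM e
end
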